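/- Let (MΣ, Q1, Q2) be a CQ weakly acyclic input instance, i.e., MΣ is a CQ weakly acyclic materialized-view setting and Q1, Q2 are CQ queries over the schema P of MΣ. Then Q1 is MΣ-conditionally contained in Q2 if and only if, for any one chase result (Q1)^{MΣ} of the MΣ-expansion of Q1 with Υ_{MΣ}, either (Q1)^{MΣ} is the trivial (empty) UCQ^≠ query, or (Q1)^{MΣ} is unconditionally contained in Q2. -/

import Mathlib

namespace CertainViews

/-! ### Values, terms, schemas, instances -/

/-- Values: constants and labeled nulls. -/
inductive Val : Type
  | const : ℕ → Val
  | null : ℕ → Val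
deriving DecidableEq

/-- A value is a constant. -/
def Val.IsConst (a : Val) : Prop := ∃ c, a = Val.const c

/-- Terms of queries and dependencies: query variables and constants. -/
inductive Term : Type
  | var : ℕ → Term
  | const : ℕ → Term
deriving DecidableEq

/-- Evaluation of a term under an assignment of values to variables
(constants are fixed, as in homomorphisms/valuations). -/
def Term.eval (ν : ℕ → Val) : Term → Val
  | .var x => ν x
  | .const c => .const c

/-- A relational schema: a collection of relation symbols, each with a fixed arity. -/
structure Schema : Type 1 where
  rel : Type
  arity : rel → ℕ

variable {S : Schema}

/-- An instance of a schema assigns a relation (a set of tuples of values)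
to each relation symbol. -/
structure Inst (S : Schema) : Type where
  rels : ∀ r : S.rel, Set (Fin (S.arity r) → Val)

/-- The facts of an instance, as a set of (relation symbol, tuple) pairs. -/
def Inst.facts (I : Inst S) : Set ((r : S.rel) × (Fin (S.arity r) → Val)) :=
  { p | p.2 ∈ I.rels p.1 }

/-- The instance determined by a set of facts. -/
def Inst.ofFacts (F : Set ((r : S.rel) × (Fin (S.arity r) → Val))) : Inst S :=
  ⟨fun r => { t | (⟨r, t⟩ : (r : S.rel) × (Fin (S.arity r) → Val)) ∈ F }⟩

/-- A ground instance contains only constants. -/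
def Inst.Ground (I : Inst S) : Prop :=
  ∀ r, ∀ t ∈ I.rels r, ∀ i, (t i).IsConst

/-- The active domain of an instance. -/
def Inst.adom (I : Inst S) : Set Val :=
  { a | ∃ p ∈ I.facts, ∃ i, p.2 i = a }

/-- Applying a mapping on values to all facts of an instance. -/
def Inst.map (ρ : Val → Val) (I : Inst S) : Inst S :=
  Inst.ofFacts ((fun p : (r : S.rel) × (Fin (S.arity r) → Val) =>
    (⟨p.1, fun i => ρ (p.2 i)⟩ : (r : S.rel) × (Fin (S.arity r) → Val))) '' I.facts)

/-- A homomorphism between instances: a mapping of values fixing constants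
that sends facts to facts. -/
def InstHom (J I : Inst S) : Prop :=
  ∃ ρ : Val → Val, (∀ c, ρ (Val.const c) = Val.const c) ∧
    ∀ p ∈ J.facts, (⟨p.1, fun i => ρ (p.2 i)⟩ : (r : S.rel) × (Fin (S.arity r) → Val)) ∈ I.facts

/-! ### Atoms, conjunctive queries -/

/-- A relational atom over a schema. -/
structure Atom (S : Schema) : Type where
  rel : S.rel
  args : Fin (S.arity rel) → Term

/-- Applying a term mapping to an atom. -/
def Atom.mapTerms (f : Term → Term) (A : Atom S) : Atom S :=
  ⟨A.rel, fun i => f (A.args i)⟩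

/-- The variables occurring in a list of atoms. -/
def BodyVars (B : List (Atom S)) : Set ℕ :=
  { x | ∃ A ∈ B, ∃ j, A.args j = Term.var x }

/-- A conjunction of atoms holds in an instance under a valuation. -/
def BodyHolds (ν : ℕ → Val) (B : List (Atom S)) (I : Inst S) : Prop :=
  ∀ A ∈ B, (fun i => (A.args i).eval ν) ∈ I.rels A.rel

/-- The set of facts obtained by applying a valuation to a list of atoms. -/
def factSet (B : List (Atom S)) (ν : ℕ → Val) : Set ((r : S.rel) × (Fin (S.arity r) → Val)) :=
  { p | ∃ A ∈ B, p = ⟨A.rel, fun i => (A.args i).eval ν⟩ }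

/-- A conjunctive query (`CQ` query) of arity `k`: a head vector of terms
and a body that is a finite conjunction of relational atoms. -/
structure CQ (S : Schema) (k : ℕ) : Type where
  head : Fin k → Term
  body : List (Atom S)

/-- Safety of a CQ query: the body is nonempty and every head variable
occurs in the body. -/
def CQ.Safe {k : ℕ} (Q : CQ S k) : Prop :=
  Q.body ≠ [] ∧ ∀ x, (∃ i, Q.head i = Term.var x) → ∃ A ∈ Q.body, ∃ j, A.args j = Term.var x

/-- The answer to a CQ query on an instance: images of the head vector
under all valuations from the body to the instance. -/
def CQ.answer {k : ℕ} (Q : CQ S k) (I : Inst S) : Set (Fin k → Val) :=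
  { t | ∃ ν : ℕ → Val, BodyHolds ν Q.body I ∧ t = fun i => (Q.head i).eval ν }

/-- The constants occurring in a CQ query. -/
def CQ.consts {k : ℕ} (Q : CQ S k) : Set ℕ :=
  { c | (∃ i, Q.head i = Term.const c) ∨ ∃ A ∈ Q.body, ∃ j, A.args j = Term.const c }

/-- A query of arity `k` in an arbitrary query language, identified with its semantics. -/
def GenQuery (S : Schema) (k : ℕ) : Type := Inst S → Set (Fin k → Val)

/-- The tuple of constants corresponding to a tuple of natural numbers. -/
def constTuple {k : ℕ} (t : Fin k → ℕ) : Fin k → Val := fun i => Val.const (t i)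


/-! ### Embedded dependencies: tgds and egds -/

/-- A tuple-generating dependency (tgd)
`∀ x̄ ȳ (φ(x̄,ȳ) → ∃ z̄ ψ(x̄,z̄))`: the body is `φ`; the head is `ψ`; the
existential variables are the head variables not occurring in the body. -/
structure TGD (S : Schema) : Type where
  body : List (Atom S)
  head : List (Atom S)

/-- Satisfaction of a tgd in an instance. -/
def TGD.holds (σ : TGD S) (I : Inst S) : Prop :=
  ∀ ν : ℕ → Val, BodyHolds ν σ.body I →
    ∃ ν' : ℕ → Val, (∀ x ∈ BodyVars σ.body, ν' x = ν x) ∧ BodyHolds ν' σ.head I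

/-- An equality-generating dependency (egd) `∀ x̄ (φ(x̄) → x₁ = x₂)`. -/
structure EGD (S : Schema) : Type where
  body : List (Atom S)
  lhs : ℕ
  rhs : ℕ

/-- Satisfaction of an egd in an instance. -/
def EGD.holds (σ : EGD S) (I : Inst S) : Prop :=
  ∀ ν : ℕ → Val, BodyHolds ν σ.body I → ν σ.lhs = ν σ.rhs

/-- An embedded dependency: a tgd or an egd. -/
inductive Dep (S : Schema) : Type
  | tgd : TGD S → Dep S
  | egd : EGD S → Dep S

def Dep.holds : Dep S → Inst S → Prop
  | .tgd σ, I => σ.holds I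
  | .egd σ, I => σ.holds I

/-- An instance satisfies a set of dependencies. -/
def Inst.satisfiesAll (I : Inst S) (D : Set (Dep S)) : Prop := ∀ d ∈ D, d.holds I

/-- An atom contains no constants. -/
def Atom.ConstantFree (A : Atom S) : Prop := ∀ i, ∃ x, A.args i = Term.var x

/-- A dependency without constants. -/
def Dep.ConstantFree : Dep S → Prop
  | .tgd σ => (∀ A ∈ σ.body, A.ConstantFree) ∧ (∀ A ∈ σ.head, A.ConstantFree)
  | .egd σ => ∀ A ∈ σ.body, A.ConstantFree

/-! ### Weak acyclicity -/

/-- A position of a schema: a relation symbol together with an attribute index. -/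
def Pos (S : Schema) : Type := S.rel × ℕ

/-- Variable `x` occurs in the list of atoms `B` at position `p`. -/
def OccursAt (B : List (Atom S)) (x : ℕ) (p : Pos S) : Prop :=
  ∃ A ∈ B, A.rel = p.1 ∧ ∃ i : Fin (S.arity A.rel), (i : ℕ) = p.2 ∧ A.args i = Term.var x

/-- Regular edge of the dependency graph, induced by a tgd. -/
def TGD.RegularEdge (σ : TGD S) (p q : Pos S) : Prop :=
  ∃ x, OccursAt σ.body x p ∧ x ∈ BodyVars σ.head ∧ OccursAt σ.head x q

/-- Special edge of the dependency graph, induced by a tgd. -/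
def TGD.SpecialEdge (σ : TGD S) (p q : Pos S) : Prop :=
  ∃ x y, OccursAt σ.body x p ∧ x ∈ BodyVars σ.head ∧
    y ∈ BodyVars σ.head ∧ y ∉ BodyVars σ.body ∧ OccursAt σ.head y q

/-- An edge (regular or special) of the dependency graph of a set of dependencies. -/
def DepEdge (D : Set (Dep S)) (p q : Pos S) : Prop :=
  ∃ σ : TGD S, Dep.tgd σ ∈ D ∧ (σ.RegularEdge p q ∨ σ.SpecialEdge p q)

/-- A set of tgds and egds is weakly acyclic iff the dependency graph of its
tgds has no cycle going through a special edge. -/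
def WeaklyAcyclic (D : Set (Dep S)) : Prop :=
  ¬ ∃ (σ : TGD S) (p q : Pos S), Dep.tgd σ ∈ D ∧ σ.SpecialEdge p q ∧
      Relation.ReflTransGen (DepEdge D) q p



/-! ### Views and materialized-view settings -/

/-- A finite set of views over a schema `S`: view names with arities,
each defined by a (safe) CQ query over `S`. -/
structure Views (S : Schema) : Type 1 where
  idx : Type
  finite : Finite idx
  arity : idx → ℕ
  defn : ∀ v : idx, CQ S (arity v)
  safe : ∀ v, (defn v).Safe

/-- The view schema determined by a set of views. -/
def Views.schema {S : Schema} (V : Views S) : Schema := ⟨V.idx, V.arity⟩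

/-- The image of an instance under a set of views: the instance of the view
schema assigning to each view the answer of its defining query. -/
def Views.image {S : Schema} (V : Views S) (I : Inst S) : Inst V.schema :=
  ⟨fun v => (V.defn v).answer I⟩

/-- The fixed part of a materialized-view setting: a schema `P`, a finite set `Σ`
of embedded dependencies without constants on `P`, and a set `V` of CQ views on `P`. -/
structure Frame : Type 1 where
  S : Schema
  deps : Set (Dep S)
  depsFinite : deps.Finite
  depsConstantFree : ∀ d ∈ deps, d.ConstantFree
  views : Views S

/-- A (CQ) materialized-view setting `MΣ = (P, Σ, V, MV)`:
a frame together with a finite ground instance `MV` of the view schema. -/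
structure MVSetting : Type 1 extends Frame where
  mv : Inst views.schema
  mvGround : mv.Ground
  mvFinite : mv.facts.Finite

/-- `V ⇒_{I,Σ} MV`: the ground instance `I` is a `Σ`-valid base instance
for `V` and `MV` (closed-world assumption). -/
def MVSetting.ValidBase (M : MVSetting) (I : Inst M.S) : Prop :=
  I.Ground ∧ I.satisfiesAll M.deps ∧ ∀ v, (M.views.defn v).answer I = M.mv.rels v

/-- A materialized-view setting is valid iff some `Σ`-valid base instance exists. -/
def MVSetting.Valid (M : MVSetting) : Prop := ∃ I, M.ValidBase I

/-- The set of certain answers of a query w.r.t. a materialized-view setting. -/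
def MVSetting.certain (M : MVSetting) {k : ℕ} (Q : GenQuery M.S k) : Set (Fin k → Val) :=
  { t | ∀ I, M.ValidBase I → t ∈ Q I }

/-- `consts(MΣ)`: the constants occurring in `MV` or in the view definitions. -/
def MVSetting.consts (M : MVSetting) : Set ℕ :=
  { c | (∃ p ∈ M.mv.facts, ∃ i, p.2 i = Val.const c) ∨ ∃ v, c ∈ (M.views.defn v).consts }

/-- `MΣ`-conditional containment of queries: `Q₁(I) ⊆ Q₂(I)` for every
`Σ`-valid base instance `I` for `V` and `MV`. -/
def MVSetting.CondContained (M : MVSetting) {k : ℕ} (Q1 Q2 : GenQuery M.S k) : Prop :=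
  ∀ I, M.ValidBase I → Q1 I ⊆ Q2 I

/-- The expansion query `Q₁(t̄) ← C^exp_MV`, where `C^exp_MV` is the expansion of
`MV` over the base schema: each fact of `MV` is replaced by the body of the
corresponding view definition, with head variables bound to the constants of the
fact and with nonhead variables renamed apart across the facts.  Since the
variables are renamed apart, its answer on an instance `I` is `{t̄}` exactly
when every fact of `MV` is an answer to the corresponding view on `I`
(and is empty otherwise). -/
def MVSetting.expansionQuery (M : MVSetting) {k : ℕ} (t : Fin k → ℕ) : GenQuery M.S k :=
  fun I => { u | u = constTuple t ∧ ∀ v, M.mv.rels v ⊆ (M.views.defn v).answer I }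


/-! ### Rewritings in terms of the views -/

/-- Substitution of terms for variables in a term. -/
def Term.subst (h : ℕ → Term) : Term → Term
  | .var x => h x
  | .const c => .const c

/-- The term corresponding to a value (constants to constants, nulls to variables). -/
def Val.toTerm : Val → Term
  | .const c => .const c
  | .null n => .var n

/-- `R^exp` exists and is the query `E` over the base schema:
an expansion of a rewriting `R` over the view schema is a query `E` whose
answer on every base instance is the answer of `R` on the view image. -/
def IsExpansion {S : Schema} (V : Views S) {k : ℕ} (R : GenQuery V.schema k)
    (E : GenQuery S k) : Prop :=
  ∀ I, E I = R (V.image I)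

/-- The expansion `R^exp` over the base schema of a CQ rewriting `R` over the views
of a setting, given by its semantics `R^exp(I) = R(I^{(+V)})`. -/
def MVSetting.expQuery (M : MVSetting) {k : ℕ} (R : CQ M.views.schema k) : GenQuery M.S k :=
  fun I => R.answer (M.views.image I)

/-- `R ⊑_{Σ,MV,V} Q`: the rewriting `R` is `Σ`-conditionally contained in `Q`
w.r.t. `MV` and modulo `V`, i.e., `R^exp(I) ⊆ Q(I)` for every `Σ`-valid base
instance `I` for `V` and `MV`. -/
def MVSetting.RewContained (M : MVSetting) {k : ℕ} (R : CQ M.views.schema k)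
    (Q : GenQuery M.S k) : Prop :=
  ∀ I, M.ValidBase I → M.expQuery R I ⊆ Q I

/-- A head-instantiated rewriting for a ground tuple `t̄`: a safe CQ query over the
view schema with head vector `t̄`, obtained from some safe CQ query with a
constant-free head vector by instantiating its head variables to constants
(mapping all remaining terms to themselves). -/
def IsHeadInstantiated (M : MVSetting) {k : ℕ} (t : Fin k → ℕ)
    (R : CQ M.views.schema k) : Prop :=
  R.Safe ∧ (∀ i, R.head i = Term.const (t i)) ∧
  ∃ Rg : CQ M.views.schema k, Rg.Safe ∧ (∀ i, ∃ x, Rg.head i = Term.var x) ∧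
    ∃ h : ℕ → Term,
      (∀ x, (∃ i, Rg.head i = Term.var x) → ∃ c, h x = Term.const c) ∧
      (∀ x, (¬ ∃ i, Rg.head i = Term.var x) → h x = Term.var x) ∧
      R.head = (fun i => (Rg.head i).subst h) ∧
      R.body = Rg.body.map (Atom.mapTerms (Term.subst h))

/-- A rewriting `R` is `MV`-validated iff its answer on `MV` is nonempty. -/
def MVValidated (M : MVSetting) {k : ℕ} (R : CQ M.views.schema k) : Prop :=
  (R.answer M.mv).Nonempty

/-- The atom over the view schema corresponding to a fact of `MV`. -/
def MVSetting.factAtom (M : MVSetting) (v : M.views.idx)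
    (tv : Fin (M.views.arity v) → Val) : Atom M.views.schema :=
  ⟨v, fun i => (tv i).toTerm⟩

/-- An `MV`-induced rewriting for `t̄`: a CQ rewriting with head vector `t̄`
each of whose subgoals is a fact of `MV`. -/
def IsMVInduced (M : MVSetting) {k : ℕ} (t : Fin k → ℕ) (R : CQ M.views.schema k) : Prop :=
  (∀ i, R.head i = Term.const (t i)) ∧
  ∀ A ∈ R.body, ∃ v, ∃ tv ∈ M.mv.rels v, A = M.factAtom v tv

/-- A maximal `MV`-induced rewriting for `t̄`: an `MV`-induced rewriting for `t̄`
having every fact of `MV` as a subgoal. -/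
def IsMaxMVInduced (M : MVSetting) {k : ℕ} (t : Fin k → ℕ) (R : CQ M.views.schema k) : Prop :=
  IsMVInduced M t R ∧ ∀ v, ∀ tv ∈ M.mv.rels v, M.factAtom v tv ∈ R.body


/-! ### Data exchange: canonical solutions and instance chase -/

/-- The solutions of the data-exchange setting `S^{(de)}(MΣ) = (V, P, Σ_st ∪ Σ)`
associated with a setting `MΣ`, for the source instance `MV`: a target instance `J`
such that `(MV, J)` satisfies the source-to-target tgds
`V(x̄) → ∃ȳ body_V(x̄,ȳ)` (for each view `V`) and the target dependencies `Σ`. -/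
def MVSetting.DESolution (M : MVSetting) (J : Inst M.S) : Prop :=
  J.satisfiesAll M.deps ∧ ∀ v, M.mv.rels v ⊆ (M.views.defn v).answer J

/-- A (standard) instance-chase step with a tgd: an applicable trigger whose head is
added with fresh distinct nulls for the existential variables. -/
def tgdStep {S : Schema} (σ : TGD S) (J J' : Inst S) : Prop :=
  ∃ h : ℕ → Val, BodyHolds h σ.body J ∧
    ¬ (∃ g : ℕ → Val, (∀ x ∈ BodyVars σ.body, g x = h x) ∧ BodyHolds g σ.head J) ∧
    ∃ h' : ℕ → Val, (∀ x ∈ BodyVars σ.body, h' x = h x) ∧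
      (∀ x ∈ BodyVars σ.head, x ∉ BodyVars σ.body →
        (∃ n, h' x = Val.null n) ∧ h' x ∉ J.adom) ∧
      Set.InjOn h' { x | x ∈ BodyVars σ.head ∧ x ∉ BodyVars σ.body } ∧
      J' = Inst.ofFacts (J.facts ∪ factSet σ.head h')

/-- A successful instance-chase step with an egd: a violating trigger in which at
least one of the two values is a null, which is then replaced by the other value. -/
def egdStepOk {S : Schema} (σ : EGD S) (J J' : Inst S) : Prop :=
  ∃ h : ℕ → Val, BodyHolds h σ.body J ∧ h σ.lhs ≠ h σ.rhs ∧
    (((∃ n, h σ.lhs = Val.null n) ∧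
        J' = J.map (fun a => if a = h σ.lhs then h σ.rhs else a)) ∨
     ((∃ n, h σ.rhs = Val.null n) ∧
        J' = J.map (fun a => if a = h σ.rhs then h σ.lhs else a)))

/-- A failing instance-chase step with an egd: a violating trigger equating two
distinct constants. -/
def egdStepFail {S : Schema} (σ : EGD S) (J : Inst S) : Prop :=
  ∃ h : ℕ → Val, BodyHolds h σ.body J ∧ h σ.lhs ≠ h σ.rhs ∧
    (h σ.lhs).IsConst ∧ (h σ.rhs).IsConst

/-- A successful chase step with some dependency of a set. -/
def depStepTo {S : Schema} (D : Set (Dep S)) (J J' : Inst S) : Prop :=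
  (∃ σ : TGD S, Dep.tgd σ ∈ D ∧ tgdStep σ J J') ∨
  (∃ σ : EGD S, Dep.egd σ ∈ D ∧ egdStepOk σ J J')

/-- `J` is a (terminal) result of chasing `J0` with the dependencies `D`. -/
def ChaseResult {S : Schema} (D : Set (Dep S)) (J0 J : Inst S) : Prop :=
  Relation.ReflTransGen (depStepTo D) J0 J ∧ J.satisfiesAll D

/-- The result of chasing the source instance `MV` with the source-to-target tgds
`Σ_st` of the associated data-exchange setting: for each fact `t ∈ MV[V]`, the body
of the view definition of `V` is added, with the head variables bound to `t` and
with fresh, globally distinct nulls for the nonhead variables. -/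
def MVSetting.IsPreSolution (M : MVSetting) (J : Inst M.S) : Prop :=
  ∃ ν : (v : M.views.idx) → (Fin (M.views.arity v) → Val) → ℕ → Val,
    (∀ v, ∀ t ∈ M.mv.rels v, ∀ i, ((M.views.defn v).head i).eval (ν v t) = t i) ∧
    (∀ v, ∀ t ∈ M.mv.rels v, ∀ x ∈ BodyVars (M.views.defn v).body,
      (¬ ∃ i, (M.views.defn v).head i = Term.var x) → ∃ n, ν v t x = Val.null n) ∧
    (∀ v v' t t' x x', t ∈ M.mv.rels v → t' ∈ M.mv.rels v' →
      x ∈ BodyVars (M.views.defn v).body →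
      (¬ ∃ i, (M.views.defn v).head i = Term.var x) →
      x' ∈ BodyVars (M.views.defn v').body →
      (¬ ∃ i, (M.views.defn v').head i = Term.var x') →
      ν v t x = ν v' t' x' → v = v' ∧ HEq t t' ∧ x = x') ∧
    J.facts = ⋃ v, ⋃ t ∈ M.mv.rels v, factSet (M.views.defn v).body (ν v t)

/-- `J_de^{MΣ}`: a canonical universal solution for the source instance `MV` in the
data-exchange setting associated with `MΣ`, i.e., a terminal result of chasing `MV`
with `Σ_st ∪ Σ`. -/
def MVSetting.IsCanonicalSolution (M : MVSetting) (J : Inst M.S) : Prop :=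
  ∃ J0, M.IsPreSolution J0 ∧ ChaseResult M.deps J0 J

/-! ### MV-enhanced chase (view-verified data exchange) -/

/-- Applying, to an instance, the conjunction of equalities forcing the values
`vals j` to become the values `tgt j` (a disjunct of an `MV`-induced disjunctive
egd): succeeds iff there is a substitution fixing the constants and all other
values that realizes the equalities. -/
def substResult {S : Schema} (J J' : Inst S) {k : ℕ} (vals tgt : Fin k → Val) : Prop :=
  ∃ ρ : Val → Val, (∀ c, ρ (Val.const c) = Val.const c) ∧
    (∀ a, (∀ j, a ≠ vals j) → ρ a = a) ∧ (∀ j, ρ (vals j) = tgt j) ∧ J' = J.map ρ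

/-- The values of the head vector of a CQ under a valuation. -/
def headVals {S : Schema} {k : ℕ} (Q : CQ S k) (h : ℕ → Val) : Fin k → Val :=
  fun i => (Q.head i).eval h

/-- The set of results of one chase step with the `MV`-induced generalized egd of a
view `v` on an instance `J` (with trigger `h`): one (successful) result for each
tuple of `MV[v]`, or the empty instance `ε` (here: `none`) if all disjuncts fail. -/
def MVSetting.gedResults (M : MVSetting) (v : M.views.idx) (J : Inst M.S)
    (h : ℕ → Val) : Set (Option (Inst M.S)) :=
  { o | (∃ t ∈ M.mv.rels v, ∃ J', o = some J' ∧
           substResult J J' (headVals (M.views.defn v) h) t)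
      ∨ (o = none ∧ ∀ t ∈ M.mv.rels v,
           ¬ ∃ J', substResult J J' (headVals (M.views.defn v) h) t) }

/-- The step system of the `MV`-enhanced chase with `Σ ∪ Σ^{(MΣ)}` on instances:
to each node (an instance, or the empty instance `ε` = `none`) it assigns the
possible chase steps, each step being the set of its results.  The steps are:
chase steps with the tgds and egds of `Σ`; steps with the `MV`-induced implication
constraint `body_V → false` of each view `V` with `MV[V] = ∅`; and steps with the
`MV`-induced disjunctive egd `body_V(x̄,ȳ) → ⋁_i (x̄ = t̄ᵢ)` of each view `V` of
positive arity with `MV[V] ≠ ∅`. -/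
def MVSetting.mvChaseSteps (M : MVSetting) :
    Option (Inst M.S) → Set (Set (Option (Inst M.S)))
  | none => ∅
  | some J =>
    { C | (∃ σ : TGD M.S, Dep.tgd σ ∈ M.deps ∧ ∃ J', tgdStep σ J J' ∧ C = {some J'})
        ∨ (∃ σ : EGD M.S, Dep.egd σ ∈ M.deps ∧ ∃ J', egdStepOk σ J J' ∧ C = {some J'})
        ∨ (∃ σ : EGD M.S, Dep.egd σ ∈ M.deps ∧ egdStepFail σ J ∧
             C = {(none : Option (Inst M.S))})
        ∨ (∃ v, M.mv.rels v = ∅ ∧ (∃ h, BodyHolds h (M.views.defn v).body J) ∧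
             C = {(none : Option (Inst M.S))})
        ∨ (∃ v, (M.mv.rels v).Nonempty ∧ 1 ≤ M.views.arity v ∧ ∃ h : ℕ → Val,
             BodyHolds h (M.views.defn v).body J ∧
             (∀ t ∈ M.mv.rels v, ∃ i, headVals (M.views.defn v) h i ≠ t i) ∧
             C = M.gedResults v J h) }

/-- One edge of the MV-enhanced chase: passing from a node to one of the results of
an applicable chase step. -/
def MVSetting.mvStep (M : MVSetting) (a b : Option (Inst M.S)) : Prop :=
  ∃ C ∈ M.mvChaseSteps a, b ∈ C

/-- Reachability along MV-enhanced chase steps. -/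
def MVSetting.mvReach (M : MVSetting) : Option (Inst M.S) → Option (Inst M.S) → Prop :=
  Relation.ReflTransGen M.mvStep

/-- A view-verified universal solution for `MΣ`: a nonempty leaf of a (finite)
MV-enhanced chase of a canonical universal solution `J_de^{MΣ}` with
`Σ ∪ Σ^{(MΣ)}`, i.e., a terminal nonempty instance reachable from `J_de^{MΣ}`. -/
def MVSetting.IsVVSolution (M : MVSetting) (J : Inst M.S) : Prop :=
  ∃ Jde, M.IsCanonicalSolution Jde ∧ M.mvReach (some Jde) (some J) ∧
    M.mvChaseSteps (some J) = ∅

/-- A grounded version of an instance `J`: the result of consistently replacing all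
its nulls with distinct new constants (avoiding the constants in `avoid`). -/
def GroundedVersion {S : Schema} (avoid : Set ℕ) (J J' : Inst S) : Prop :=
  ∃ ρ : Val → Val, (∀ c, ρ (Val.const c) = Val.const c) ∧
    (∀ n, ∃ c, ρ (Val.null n) = Val.const c ∧ c ∉ avoid ∧ Val.const c ∉ J.adom) ∧
    Set.InjOn ρ J.adom ∧ J' = J.map ρ

/-- Chains of a given length for a binary relation. -/
def chainOfLength {α : Type*} (R : α → α → Prop) : ℕ → α → α → Prop
  | 0, a, b => a = b
  | n + 1, a, b => ∃ c, R a c ∧ chainOfLength R n c b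


/-! ### Finitely-branching rooted trees, for chase trees -/

/-- Finite rooted trees with labels in `β`. -/
inductive RTree (β : Type) : Type
  | node : β → List (RTree β) → RTree β

namespace RTree

variable {β : Type}

/-- The label of the root. -/
def label : RTree β → β
  | .node b _ => b

mutual
  /-- The depth of a tree (a single node has depth 1). -/
  def depth : RTree β → ℕ
    | .node _ ts => depthL ts + 1
  def depthL : List (RTree β) → ℕ
    | [] => 0
    | t :: ts => max (depth t) (depthL ts)
end

mutual
  /-- The number of leaves of a tree. -/
  def leafCount : RTree β → ℕ
    | .node _ [] => 1
    | .node _ (t :: ts) => leafCount t + leafCountL ts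
  def leafCountL : List (RTree β) → ℕ
    | [] => 0
    | t :: ts => leafCount t + leafCountL ts
end

mutual
  /-- The list of labels of the leaves of a tree. -/
  def leaves : RTree β → List β
    | .node b [] => [b]
    | .node _ (t :: ts) => leaves t ++ leavesL ts
  def leavesL : List (RTree β) → List β
    | [] => []
    | t :: ts => leaves t ++ leavesL ts
end

/-- The labels of a list of trees, as a set. -/
def labelsOf (ts : List (RTree β)) : Set β := { b | ∃ t ∈ ts, label t = b }

mutual
  /-- A chase tree for a disjunctive-step system `D` (assigning to each node label
  the set of possible chase steps, each step given by the set of its results):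
  each inner node's children are exactly the results of one applicable chase step,
  and leaves are exactly the nodes to which no chase step applies. -/
  def Valid (D : β → Set (Set β)) : RTree β → Prop
    | .node b ts => (D b = ∅ ∧ ts = []) ∨
        (∃ C ∈ D b, labelsOf ts = C ∧ ValidL D ts)
  def ValidL (D : β → Set (Set β)) : List (RTree β) → Prop
    | [] => True
    | t :: ts => Valid D t ∧ ValidL D ts
end

end RTree





/-! ### CQ queries with disequalities and unions thereof -/

/-- A `CQ^≠` query: a CQ query whose body may also contain disequality atoms. -/
structure CQNeq (S : Schema) (k : ℕ) : Type where
  head : Fin k → Term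
  body : List (Atom S)
  diseqs : List (Term × Term)

/-- The answer to a `CQ^≠` query on an instance (via valuations: homomorphisms
from the relational atoms that satisfy all the disequalities). -/
def CQNeq.answer {k : ℕ} (Q : CQNeq S k) (I : Inst S) : Set (Fin k → Val) :=
  { t | ∃ ν : ℕ → Val, BodyHolds ν Q.body I ∧
      (∀ p ∈ Q.diseqs, p.1.eval ν ≠ p.2.eval ν) ∧ t = fun i => (Q.head i).eval ν }

/-- The answer to a `UCQ^≠` query (a finite set of `CQ^≠` components; the
trivial query `[]` has empty answer on every instance). -/
def ucqAnswer {k : ℕ} (R : List (CQNeq S k)) (I : Inst S) : Set (Fin k → Val) :=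
  { t | ∃ q ∈ R, t ∈ q.answer I }

/-- The terms occurring in a `CQ^≠` query. -/
def CQNeq.terms {k : ℕ} (Q : CQNeq S k) : Set Term :=
  { u | (∃ i, Q.head i = u) ∨ (∃ A ∈ Q.body, ∃ j, A.args j = u) ∨
        (∃ p ∈ Q.diseqs, p.1 = u ∨ p.2 = u) }

/-- Applying a term mapping to a `CQ^≠` query. -/
def CQNeq.mapTerms {k : ℕ} (θ : Term → Term) (Q : CQNeq S k) : CQNeq S k :=
  ⟨fun i => θ (Q.head i), Q.body.map (Atom.mapTerms θ), Q.diseqs.map fun p => (θ p.1, θ p.2)⟩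

/-- The query has the disequality atom `a ≠ b` (in either orientation). -/
def CQNeq.hasDiseq {k : ℕ} (Q : CQNeq S k) (a b : Term) : Prop :=
  (a, b) ∈ Q.diseqs ∨ (b, a) ∈ Q.diseqs

/-- A homomorphism (on the query level) from a conjunction of atoms into the
body of a `CQ^≠` query. -/
def homTo {k : ℕ} (h : ℕ → Term) (B : List (Atom S)) (Q : CQNeq S k) : Prop :=
  ∀ A ∈ B, A.mapTerms (Term.subst h) ∈ Q.body

/-- The size of an atom. -/
def Atom.size (A : Atom S) : ℕ := 1 + S.arity A.rel

/-- The size of a CQ query. -/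
def CQSize {k : ℕ} (_head : Fin k → Term) (body : List (Atom S)) : ℕ :=
  k + (body.map Atom.size).sum

def CQ.size {k : ℕ} (Q : CQ S k) : ℕ := CQSize Q.head Q.body
def CQNeq.size {k : ℕ} (Q : CQNeq S k) : ℕ := CQSize Q.head Q.body + Q.diseqs.length

/-! ### Normalization of conjunctions of atoms -/

/-- The original (renamed-apart) copy of a term: variable `x` becomes `2x`,
so that the fresh variables introduced by normalization (odd numbers) are new. -/
def Term.orig : Term → Term
  | .var x => .var (2 * x)
  | .const c => .const c

/-- The original (renamed) copy of an atom. -/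
def Atom.orig (A : Atom S) : Atom S := A.mapTerms Term.orig

/-- The argument list of an atom. -/
def Atom.argsList (A : Atom S) : List Term := List.ofFn A.args

/-- The term in position `(j, i)` of a list of atoms, if any. -/
def atomArg? (B : List (Atom S)) (j i : ℕ) : Option Term :=
  match B[j]? with
  | none => none
  | some A => A.argsList[i]?

/-- Whether the occurrence at position `(j, i)` is a duplicate occurrence,
i.e., the same variable or constant already occurs at an earlier position. -/
def isDup (B : List (Atom S)) (j i : ℕ) : Bool :=
  match atomArg? B j i with
  | none => false
  | some u =>
      (List.range B.length).any fun j' =>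
        match B[j']? with
        | none => false
        | some A' =>
            (List.range A'.argsList.length).any fun i' =>
              (decide (j' < j) || (decide (j' = j) && decide (i' < i))) &&
              decide (A'.argsList[i']? = some u)

/-- The fresh variable replacing the duplicate occurrence at position `(j, i)`. -/
def freshVar (j i : ℕ) : Term := Term.var (2 * Nat.pair j i + 1)

/-- The normalized copy of the atom at index `j` of `B`: each duplicate occurrence
of a variable or constant is replaced by a fresh distinct variable. -/
def normAtom (B : List (Atom S)) (j : ℕ) (A : Atom S) : Atom S :=
  ⟨A.rel, fun i => if isDup B j (i : ℕ) then freshVar j (i : ℕ) else (A.args i).orig⟩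

/-- `ℛ(φ⁽ⁿ⁾)`: the relational part of the normalized version of a conjunction of
atoms. -/
def normBody (B : List (Atom S)) : List (Atom S) :=
  (B.zipIdx.map Prod.swap).map fun p => normAtom B p.1 p.2

/-- `ℰ(φ⁽ⁿ⁾)`: the equality atoms of the normalized version, equating each fresh
variable with the term it replaced. -/
def normEqs (B : List (Atom S)) : List (Term × Term) :=
  ((B.zipIdx.map Prod.swap).map fun p =>
    (p.2.argsList.zipIdx.map Prod.swap).filterMap fun q =>
      if isDup B p.1 q.1 then some (freshVar p.1 q.1, q.2.orig) else none).flatten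


/-! ### Generalized dependencies and the chase of `CQ^≠` queries with `Υ_{MΣ}` -/

/-- A disjunct of the consequent of a generalized dependency: an existentially
quantified conjunction of relational atoms, a conjunction of equalities, or a
single disequality.  (`false`, as in generalized implication constraints, is
represented by the absence of disjuncts.) -/
inductive GDisj (S : Schema) : Type
  | exAtoms : List (Atom S) → GDisj S
  | eqs : List (Term × Term) → GDisj S
  | neq : Term → Term → GDisj S

/-- A generalized dependency: an antecedent (a conjunction of relational atoms)
and a finite disjunction of disjuncts. -/
structure GDep (S : Schema) : Type where
  ante : List (Atom S)
  disjs : List (GDisj S)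

variable {S : Schema} {k : ℕ}

/-- Two terms are unequal for trivial reasons (distinct constants). -/
def diseqTaut (a b : Term) : Prop :=
  ∃ c d, a = Term.const c ∧ b = Term.const d ∧ c ≠ d

/-- A disjunct is already satisfied (is a tautology) in a `CQ^≠` query under a
trigger `h` (with `av` the variables of the antecedent). -/
def disjSat (Q : CQNeq S k) (h : ℕ → Term) (av : Set ℕ) : GDisj S → Prop
  | .exAtoms ψ => ∃ h' : ℕ → Term, (∀ x ∈ av, h' x = h x) ∧
      ∀ A ∈ ψ, A.mapTerms (Term.subst h') ∈ Q.body
  | .eqs L => ∀ p ∈ L, p.1.subst h = p.2.subst h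
  | .neq a b => diseqTaut (a.subst h) (b.subst h) ∨ Q.hasDiseq (a.subst h) (b.subst h)

/-- The result of a chase step on a `CQ^≠` query with an equality conjunct:
the query is rewritten by a substitution that realizes all the equalities,
fixes the constants, and is the identity outside the terms being equated.
The step requires that none of the equated pairs be disequated in the query. -/
def eqsChild (Q : CQNeq S k) (h : ℕ → Term) (L : List (Term × Term)) (Q' : CQNeq S k) : Prop :=
  (∀ p ∈ L, ¬ Q.hasDiseq (p.1.subst h) (p.2.subst h)) ∧
  ∃ θ : Term → Term, (∀ c, θ (Term.const c) = Term.const c) ∧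
    (∀ u, (∀ p ∈ L, u ≠ p.1.subst h ∧ u ≠ p.2.subst h) → θ u = u) ∧
    (∀ p ∈ L, θ (p.1.subst h) = θ (p.2.subst h)) ∧
    (∀ u, θ u = u ∨ ∃ p ∈ L, θ u = θ (p.1.subst h)) ∧
    Q' = Q.mapTerms θ

/-- A chase step with an equality conjunct fails (e.g., it equates distinct
constants, or terms that are explicitly disequated in the query). -/
def eqsFails (Q : CQNeq S k) (h : ℕ → Term) (L : List (Term × Term)) : Prop :=
  ¬ ∃ Q', eqsChild Q h L Q'

/-- The result of a chase step with a disequality disjunct: the disequality is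
added to the query. -/
def neqChild (Q : CQNeq S k) (h : ℕ → Term) (a b : Term) (Q' : CQNeq S k) : Prop :=
  a.subst h ≠ b.subst h ∧
  Q' = ⟨Q.head, Q.body, Q.diseqs ++ [(a.subst h, b.subst h)]⟩

/-- A chase step with a disequality disjunct fails: the two sides are the same
variable or the same constant. -/
def neqFails (_Q : CQNeq S k) (h : ℕ → Term) (a b : Term) : Prop :=
  a.subst h = b.subst h

/-- The result of a chase step with an existential-atoms disjunct: the image of the
atoms is conjoined to the body, with fresh distinct variables for the
existential variables. -/
def exAtomsChild (Q : CQNeq S k) (h : ℕ → Term) (av : Set ℕ) (ψ : List (Atom S))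
    (Q' : CQNeq S k) : Prop :=
  ∃ h' : ℕ → Term, (∀ x ∈ av, h' x = h x) ∧
    (∀ x ∈ BodyVars ψ, x ∉ av → ∃ y, h' x = Term.var y ∧ Term.var y ∉ Q.terms) ∧
    Set.InjOn h' { x | x ∈ BodyVars ψ ∧ x ∉ av } ∧
    Q' = ⟨Q.head, Q.body ++ ψ.map (Atom.mapTerms (Term.subst h')), Q.diseqs⟩

/-- The (successful) results of applying one disjunct in a chase step. -/
def disjChild (Q : CQNeq S k) (h : ℕ → Term) (av : Set ℕ) :
    GDisj S → Set (Option (CQNeq S k))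
  | .exAtoms ψ => { o | ∃ Q', o = some Q' ∧ exAtomsChild Q h av ψ Q' }
  | .eqs L => { o | ∃ Q', o = some Q' ∧ eqsChild Q h L Q' }
  | .neq a b => { o | ∃ Q', o = some Q' ∧ neqChild Q h a b Q' }

/-- Whether applying a disjunct in a chase step fails. -/
def disjFails (Q : CQNeq S k) (h : ℕ → Term) : GDisj S → Prop
  | .exAtoms _ => False
  | .eqs L => eqsFails Q h L
  | .neq a b => neqFails Q h a b

/-- The set of results of one chase step with a generalized dependency `g` on a
`CQ^≠` query `Q` with trigger `h`: the successful results of the disjuncts, or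
the trivial query `ε` (= `none`) if all disjuncts fail. -/
def gdepResults (g : GDep S) (Q : CQNeq S k) (h : ℕ → Term) : Set (Option (CQNeq S k)) :=
  { o | (∃ d ∈ g.disjs, o ∈ disjChild Q h (BodyVars g.ante) d)
      ∨ (o = none ∧ ∀ d ∈ g.disjs, disjFails Q h d) }

/-- The possible chase steps with a generalized dependency on a `CQ^≠` query:
a trigger from the antecedent into the body such that no disjunct is already
satisfied, together with the resulting set of children. -/
def gdepSteps (g : GDep S) (Q : CQNeq S k) : Set (Set (Option (CQNeq S k))) :=
  { C | ∃ h : ℕ → Term, homTo h g.ante Q ∧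
      (∀ d ∈ g.disjs, ¬ disjSat Q h (BodyVars g.ante) d) ∧ C = gdepResults g Q h }

/-- The `≠`-transformation `σ_(≠)` of a tgd `σ : φ → ∃z̄ ψ`:
`ℛ(φ⁽ⁿ⁾) → (∃z̄ ψ) ∨ ¬ℰ(φ⁽ⁿ⁾)`. -/
def TGD.neqT (σ : TGD S) : GDep S :=
  ⟨normBody σ.body,
   GDisj.exAtoms (σ.head.map Atom.orig) :: (normEqs σ.body).map fun p => GDisj.neq p.1 p.2⟩

/-- The `≠`-transformation `σ_(≠)` of an egd `σ : φ → x₁ = x₂`: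
`ℛ(φ⁽ⁿ⁾) → (x₁ = x₂) ∨ ¬ℰ(φ⁽ⁿ⁾)`. -/
def EGD.neqT (σ : EGD S) : GDep S :=
  ⟨normBody σ.body,
   GDisj.eqs [((Term.var σ.lhs).orig, (Term.var σ.rhs).orig)] ::
     (normEqs σ.body).map fun p => GDisj.neq p.1 p.2⟩

/-- The `MV`-induced generalized implication constraint `ι_V` of a view `V` with
`MV[V] = ∅`:  `ℛ(φ⁽ⁿ⁾) → false ∨ ¬ℰ(φ⁽ⁿ⁾)`. -/
def MVSetting.gicDep (M : MVSetting) (v : M.views.idx) : GDep M.S :=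
  ⟨normBody (M.views.defn v).body,
   (normEqs (M.views.defn v).body).map fun p => GDisj.neq p.1 p.2⟩

/-- The equalities `x̄ = t̄` between the (normalized) head vector of a view and a
tuple of `MV`. -/
def MVSetting.gnegdPairs (M : MVSetting) (v : M.views.idx)
    (t : Fin (M.views.arity v) → Val) : List (Term × Term) :=
  List.ofFn fun i => (((M.views.defn v).head i).orig, (t i).toTerm)

/-- The possible chase steps with the `MV`-induced generalized negd `τ_V` of a view
`V` of positive arity with `MV[V] ≠ ∅`:
`ℛ(φ⁽ⁿ⁾) → ⋁_{i} (x̄ = t̄ᵢ) ∨ ¬ℰ(φ⁽ⁿ⁾)`, one equality disjunct per tuple of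
`MV[V]`. -/
def MVSetting.gnegdSteps (M : MVSetting) {k : ℕ} (v : M.views.idx) (Q : CQNeq M.S k) :
    Set (Set (Option (CQNeq M.S k))) :=
  { C | (M.mv.rels v).Nonempty ∧ 1 ≤ M.views.arity v ∧
      ∃ h : ℕ → Term, homTo h (normBody (M.views.defn v).body) Q ∧
        (∀ t ∈ M.mv.rels v,
          ¬ disjSat Q h (BodyVars (normBody (M.views.defn v).body)) (GDisj.eqs (M.gnegdPairs v t))) ∧
        (∀ p ∈ normEqs (M.views.defn v).body,
          ¬ disjSat Q h (BodyVars (normBody (M.views.defn v).body)) (GDisj.neq p.1 p.2)) ∧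
        C = { o | (∃ t ∈ M.mv.rels v,
                    o ∈ disjChild Q h (BodyVars (normBody (M.views.defn v).body))
                        (GDisj.eqs (M.gnegdPairs v t)))
               ∨ (∃ p ∈ normEqs (M.views.defn v).body,
                    o ∈ disjChild Q h (BodyVars (normBody (M.views.defn v).body))
                        (GDisj.neq p.1 p.2))
               ∨ (o = none ∧
                    (∀ t ∈ M.mv.rels v, disjFails Q h (GDisj.eqs (M.gnegdPairs v t))) ∧
                    (∀ p ∈ normEqs (M.views.defn v).body, disjFails Q h (GDisj.neq p.1 p.2))) } }

/-- The step system of the chase of `CQ^≠` queries with the dependencies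
`Υ_{MΣ} = Φ_(MV) ∪ Σ_(≠)`: steps with the `≠`-transformations of the tgds and
egds of `Σ`, with the `MV`-induced generalized implication constraints, and with
the `MV`-induced generalized negds.  (`none` is the node `ε`.) -/
def MVSetting.qSteps (M : MVSetting) (k : ℕ) :
    Option (CQNeq M.S k) → Set (Set (Option (CQNeq M.S k)))
  | none => ∅
  | some Q =>
    { C | (∃ σ : TGD M.S, Dep.tgd σ ∈ M.deps ∧ C ∈ gdepSteps σ.neqT Q)
        ∨ (∃ σ : EGD M.S, Dep.egd σ ∈ M.deps ∧ C ∈ gdepSteps σ.neqT Q)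
        ∨ (∃ v, M.mv.rels v = ∅ ∧ C ∈ gdepSteps (M.gicDep v) Q)
        ∨ (∃ v, C ∈ M.gnegdSteps v Q) }

/-- One edge of the chase of `CQ^≠` queries with `Υ_{MΣ}`. -/
def MVSetting.qStep (M : MVSetting) (k : ℕ) (a b : Option (CQNeq M.S k)) : Prop :=
  ∃ C ∈ M.qSteps k a, b ∈ C

/-- The `MΣ`-expansion `Q'` of a CQ query `Q`: the `CQ^≠` query (without
disequalities) obtained by conjoining the body of `Q` with `C^exp_MV`, the
expansion of `MV` over the base schema, in which all the variables of
`C^exp_MV` have been renamed apart from those of `Q` (the head variables of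
each view definition being bound to the constants of the corresponding fact
of `MV`, and its nonhead variables being mapped to globally distinct fresh
variables). -/
def MVSetting.IsMSExpansion (M : MVSetting) {k : ℕ} (Q : CQ M.S k) (Q' : CQNeq M.S k) : Prop :=
  Q'.head = Q.head ∧ Q'.diseqs = [] ∧
  ∃ ν : (v : M.views.idx) → (Fin (M.views.arity v) → Val) → ℕ → Term,
    (∀ v, ∀ t ∈ M.mv.rels v, ∀ i,
      ((M.views.defn v).head i).subst (ν v t) = (t i).toTerm) ∧
    (∀ v, ∀ t ∈ M.mv.rels v, ∀ x ∈ BodyVars (M.views.defn v).body,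
      (¬ ∃ i, (M.views.defn v).head i = Term.var x) →
      ∃ y, ν v t x = Term.var y ∧
        (∀ i, Q.head i ≠ Term.var y) ∧ ¬ ∃ A ∈ Q.body, ∃ j, A.args j = Term.var y) ∧
    (∀ v v' t t' x x', t ∈ M.mv.rels v → t' ∈ M.mv.rels v' →
      x ∈ BodyVars (M.views.defn v).body →
      (¬ ∃ i, (M.views.defn v).head i = Term.var x) →
      x' ∈ BodyVars (M.views.defn v').body →
      (¬ ∃ i, (M.views.defn v').head i = Term.var x') →
      ν v t x = ν v' t' x' → v = v' ∧ HEq t t' ∧ x = x') ∧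
    { A | A ∈ Q'.body } =
      { A | A ∈ Q.body } ∪
      { A | ∃ v, ∃ t ∈ M.mv.rels v, ∃ A0 ∈ (M.views.defn v).body,
              A = A0.mapTerms (Term.subst (ν v t)) }

/-- `R` is a chase result `(Q)^{MΣ}` of the `CQ^≠` query `Q0` with `Υ_{MΣ}`:
the `UCQ^≠` query whose components are the non-`ε` leaves of a (finite) chase
tree for `MΣ` and `Q0`. -/
def MVSetting.IsChaseResult (M : MVSetting) {k : ℕ} (Q0 : CQNeq M.S k)
    (R : List (CQNeq M.S k)) : Prop :=
  ∃ T : RTree (Option (CQNeq M.S k)), T.label = some Q0 ∧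
    RTree.Valid (M.qSteps k) T ∧ R = T.leaves.filterMap id


/-! ### Complexity: polynomial time, `Π^p_2`, and concrete problem encodings -/

/-- A polynomial-time computable function on natural numbers (under the standard
binary encoding), via Mathlib's Turing-machine model. -/
def PTimeFun (f : ℕ → ℕ) : Prop :=
  Nonempty (Turing.TM2ComputableInPolyTime
    Computability.encodingNatBool.encode Computability.encodingNatBool.encode f)

/-- Pairing of three inputs into one. -/
def tripleCode (x y z : ℕ) : ℕ := Nat.pair x (Nat.pair y z)

/-- Membership in `Π^p_2` (the second level of the polynomial hierarchy) of a
language of (binary-encoded) natural numbers: a `∀∃` certificate characterization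
with polynomial certificate bounds and a polynomial-time verifier. -/
def InPi2P (L : Set ℕ) : Prop :=
  ∃ (c : ℕ) (f : ℕ → ℕ), PTimeFun f ∧
    ∀ x, x ∈ L ↔ ∀ y, Nat.size y ≤ (Nat.size x + 1) ^ c →
      ∃ z, Nat.size z ≤ (Nat.size x + 1) ^ c ∧ f (tripleCode x y z) = 1

/-- Polynomial-time many-one reducibility. -/
def PolyReduces (A B : Set ℕ) : Prop :=
  ∃ f : ℕ → ℕ, PTimeFun f ∧ ∀ x, x ∈ A ↔ f x ∈ B

/-- `Π^p_2`-hardness of a language. -/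
def Pi2PHard (L : Set ℕ) : Prop := ∀ A, InPi2P A → PolyReduces A L

instance : Encodable Term :=
  Encodable.ofEquiv (ℕ ⊕ ℕ)
    { toFun := fun t => match t with | .var x => .inl x | .const c => .inr c
      invFun := fun s => match s with | .inl x => .var x | .inr c => .const c
      left_inv := fun t => by cases t <;> rfl
      right_inv := fun s => by cases s <;> rfl }

/-- A concrete schema: relation symbols `0, …, m-1` with given arities. -/
structure CSchema : Type where
  m : ℕ
  ar : Fin m → ℕ

/-- The schema denoted by a concrete schema. -/
abbrev CSchema.toSchema (C : CSchema) : Schema := ⟨Fin C.m, C.ar⟩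

/-- A concrete finite set of views over a concrete schema:
view names `0, …, l-1` with arities, defined by safe CQ queries. -/
structure CViews (C : CSchema) : Type where
  l : ℕ
  var : Fin l → ℕ
  defn : ∀ v : Fin l, CQ C.toSchema (var v)
  safe : ∀ v, (defn v).Safe

/-- The set of views denoted by a concrete set of views. -/
def CViews.toViews {C : CSchema} (W : CViews C) : Views C.toSchema :=
  ⟨Fin W.l, inferInstance, W.var, W.defn, W.safe⟩

/-- The concrete syntax of an atom over a concrete schema. -/
def Atom.syn {C : CSchema} (A : Atom C.toSchema) : ℕ × List Term :=
  (A.rel.val, List.ofFn A.args)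

/-- The concrete syntax of a CQ query over a concrete schema. -/
def CQ.syn {C : CSchema} {k : ℕ} (Q : CQ C.toSchema k) : List Term × List (ℕ × List Term) :=
  (List.ofFn Q.head, Q.body.map Atom.syn)

/-- The ground instance of the view schema denoted by a concrete list of view facts
(each a view index together with a list of constants). -/
def mvDen {C : CSchema} (W : CViews C) (L : List (ℕ × List ℕ)) : Inst W.toViews.schema :=
  ⟨fun v => { t | ∃ e ∈ L, e.1 = v.val ∧ ∃ hl : e.2.length = W.var v,
      t = fun i => Val.const (e.2.get (Fin.cast hl.symm i)) }⟩

/-- The certain-query-answer problem, as a language: the fixed parts are a schema,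
a set of dependencies, and the view definitions; the input is (an encoding of) a
CQ query `Q`, a ground tuple `t̄` of length equal to the arity of `Q`, and a set of
view answers `MV`, and the yes-instances are those in which `t̄` is a certain
answer to `Q` w.r.t. the setting `(P, Σ, V, MV)`. -/
def certLang (C : CSchema) (W : CViews C) (ds : Set (Dep C.toSchema))
    (h1 : ds.Finite) (h2 : ∀ d ∈ ds, d.ConstantFree) : Set ℕ :=
  { n | ∃ (k : ℕ) (Q : CQ C.toSchema k) (t : Fin k → ℕ) (L : List (ℕ × List ℕ)),
      n = Encodable.encode (Q.syn, List.ofFn t, L) ∧ Q.Safe ∧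
      ∃ (hg : (mvDen W L).Ground) (hf : (mvDen W L).facts.Finite),
        constTuple t ∈
          (MVSetting.mk (Frame.mk C.toSchema ds h1 h2 W.toViews) (mvDen W L) hg hf).certain
            Q.answer }

/-- The `MΣ`-conditional-containment problem, as a language: the fixed parts are a
schema, a set of dependencies, and the view definitions; the input is (an encoding
of) two CQ queries `Q₁, Q₂` of the same arity and a set of view answers `MV`, and
the yes-instances are those in which `Q₁ ⊑_{MΣ} Q₂` for the setting
`(P, Σ, V, MV)`. -/
def contLang (C : CSchema) (W : CViews C) (ds : Set (Dep C.toSchema))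
    (h1 : ds.Finite) (h2 : ∀ d ∈ ds, d.ConstantFree) : Set ℕ :=
  { n | ∃ (k : ℕ) (Q1 Q2 : CQ C.toSchema k) (L : List (ℕ × List ℕ)),
      n = Encodable.encode (Q1.syn, Q2.syn, L) ∧ Q1.Safe ∧ Q2.Safe ∧
      ∃ (hg : (mvDen W L).Ground) (hf : (mvDen W L).facts.Finite),
        (MVSetting.mk (Frame.mk C.toSchema ds h1 h2 W.toViews) (mvDen W L) hg hf).CondContained
          Q1.answer Q2.answer }

/-!
Soundness: on a `Σ`-valid base instance `I`, an answer of `Q₁` is an answer of its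
`MΣ`-expansion, because `I` realizes every fact of `MV`. Every dependency of `Υ_{MΣ}` holds on `I`,
so each chase step has a child that is satisfied by an extension of the valuation; following
these children, the answer reaches a non-`ε` leaf, hence `R`, hence `Q₂`.

Completeness: `Q₁` and the expansion of `MV` map into every node of the chase tree. Freeze a
non-`ε` leaf `Q` into its canonical ground instance. A valuation of a dependency body into it lifts
to a trigger of the normalized body under which the equalities `ℰ` hold syntactically, so only the
proper disjuncts can make the leaf terminal: the instance satisfies `Σ` and the views give back
exactly `MV`. It is therefore `Σ`-valid; its frozen head is an answer of `Q₁`, hence of `Q₂`, and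
unfreezing the witnessing valuation is a homomorphism `Q₂ → Q`, so `Q ⊑ Q₂`.
-/

/-! ### Substitutions and query homomorphisms -/

lemma Term.eval_subst (μ : ℕ → Val) (f : ℕ → Term) (u : Term) :
    (u.subst f).eval μ = u.eval fun x => (f x).eval μ := by
  cases u <;> rfl

lemma Term.subst_var (u : Term) : u.subst Term.var = u := by
  cases u <;> rfl

lemma Term.map_subst {θ : Term → Term} (hθ : ∀ c, θ (.const c) = .const c) (f : ℕ → Term)
    (u : Term) : θ (u.subst f) = u.subst fun x => θ (f x) := by
  cases u
  · rfl
  · exact hθ _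

lemma Term.eval_orig (μ : ℕ → Val) (u : Term) : u.orig.eval μ = u.eval fun x => μ (2 * x) := by
  cases u <;> rfl

lemma Atom.mapTerms_subst_var (A : Atom S) : A.mapTerms (Term.subst Term.var) = A := by
  cases A
  simp only [Atom.mapTerms, Term.subst_var]

def Term.idx : Term → ℕ
  | .var x => x
  | .const c => c

lemma exists_idx_bound {T : Set Term} (hT : T.Finite) : ∃ W, ∀ u ∈ T, u.idx < W := by
  obtain ⟨N, hN⟩ := (hT.image Term.idx).bddAbove
  exact ⟨N + 1, fun u hu => Nat.lt_succ_of_le (hN ⟨u, hu, rfl⟩)⟩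

def atomsTerms (B : List (Atom S)) : Set Term := { u | ∃ A ∈ B, ∃ j, A.args j = u }

lemma atomsTerms_finite (B : List (Atom S)) : (atomsTerms B).Finite := by
  refine (B.finite_toSet.biUnion fun A _ => Set.finite_range A.args).subset ?_
  rintro u ⟨A, hA, j, rfl⟩
  exact Set.mem_biUnion hA ⟨j, rfl⟩

lemma CQNeq.terms_finite (Q : CQNeq S k) : Q.terms.Finite := by
  refine (((Set.finite_range Q.head).union (atomsTerms_finite Q.body)).union
    (Q.diseqs.finite_toSet.biUnion fun p _ => (Set.toFinite {p.1, p.2}))).subset ?_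
  rintro u (⟨i, rfl⟩ | ⟨A, hA, j, rfl⟩ | ⟨p, hp, rfl | rfl⟩)
  · exact Or.inl (Or.inl ⟨i, rfl⟩)
  · exact Or.inl (Or.inr ⟨A, hA, j, rfl⟩)
  · exact Or.inr (Set.mem_biUnion hp (Or.inl rfl))
  · exact Or.inr (Set.mem_biUnion hp (Or.inr rfl))

lemma atomsTerms_subset_terms (Q : CQNeq S k) : atomsTerms Q.body ⊆ Q.terms :=
  fun _ hu => Or.inr (Or.inl hu)

lemma homTo.mem_atomsTerms {f : ℕ → Term} {B : List (Atom S)} {Q : CQNeq S k}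
    (hf : homTo f B Q) {x : ℕ} (hx : x ∈ BodyVars B) : f x ∈ atomsTerms Q.body := by
  obtain ⟨A, hA, j, hj⟩ := hx
  exact ⟨_, hf A hA, j, by simp only [Atom.mapTerms, hj, Term.subst]⟩

lemma homTo.bodyHolds {f : ℕ → Term} {B : List (Atom S)} {Q : CQNeq S k} (hf : homTo f B Q)
    {μ : ℕ → Val} {I : Inst S} (hμ : BodyHolds μ Q.body I) :
    BodyHolds (fun x => (f x).eval μ) B I := by
  intro A hA
  have h := hμ _ (hf A hA)
  simp only [Atom.mapTerms, Term.eval_subst] at h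
  exact h

lemma homTo.mapTerms {f : ℕ → Term} {B : List (Atom S)} {Q : CQNeq S k} (hf : homTo f B Q)
    {θ : Term → Term} (hθ : ∀ c, θ (.const c) = .const c) :
    homTo (fun x => θ (f x)) B (Q.mapTerms θ) := by
  intro A hA
  have h := List.mem_map_of_mem (f := Atom.mapTerms θ) (hf A hA)
  simp only [Atom.mapTerms, Term.map_subst hθ] at h
  exact h

def MapsInto {n : ℕ} (B : List (Atom S)) (hd hd' : Fin n → Term) (Q : CQNeq S k) : Prop :=
  ∃ f, homTo f B Q ∧ ∀ i, (hd i).subst f = hd' i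

lemma MapsInto.mapTerms {n : ℕ} {B : List (Atom S)} {hd hd' : Fin n → Term} {Q : CQNeq S k}
    (h : MapsInto B hd hd' Q) {θ : Term → Term} (hθ : ∀ c, θ (.const c) = .const c) :
    MapsInto B hd (fun i => θ (hd' i)) (Q.mapTerms θ) := by
  obtain ⟨f, hf, hhead⟩ := h
  exact ⟨_, hf.mapTerms hθ, fun i => by simp only [← hhead, Term.map_subst hθ]⟩

lemma MapsInto.mono {n : ℕ} {B : List (Atom S)} {hd hd' : Fin n → Term} {Q Q' : CQNeq S k}
    (h : MapsInto B hd hd' Q) (hQ : ∀ A ∈ Q.body, A ∈ Q'.body) : MapsInto B hd hd' Q' := by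
  obtain ⟨f, hf, hhead⟩ := h
  exact ⟨f, fun A hA => hQ _ (hf A hA), hhead⟩

lemma MapsInto.mem_answer {n : ℕ} {Q1 : CQ S n} {hd' : Fin n → Term} {Q : CQNeq S k}
    (h : MapsInto Q1.body Q1.head hd' Q) {μ : ℕ → Val} {I : Inst S} (hμ : BodyHolds μ Q.body I) :
    (fun i => (hd' i).eval μ) ∈ Q1.answer I := by
  obtain ⟨f, hf, hhead⟩ := h
  exact ⟨_, hf.bodyHolds hμ, funext fun i => by rw [← hhead, Term.eval_subst]⟩

lemma answer_subset_of_mapsInto {Q2 : CQ S k} {Q : CQNeq S k}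
    (h : MapsInto Q2.body Q2.head Q.head Q) (I : Inst S) : Q.answer I ⊆ Q2.answer I := by
  rintro t ⟨μ, hμ, -, rfl⟩
  exact h.mem_answer hμ

/-! ### Canonical instances -/

lemma Inst.Ground.isConst_of_bodyHolds {I : Inst S} (hI : I.Ground) {g : ℕ → Val}
    {B : List (Atom S)} (hg : BodyHolds g B I) {x : ℕ} (hx : x ∈ BodyVars B) : (g x).IsConst := by
  obtain ⟨A, hA, j, hj⟩ := hx
  have h := hI _ _ (hg A hA) j
  simp only [hj, Term.eval] at h
  exact h

def freezeVal (W : ℕ) : ℕ → Val := fun x => Val.const (x + W)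

def CQNeq.canonInst (Q : CQNeq S k) (W : ℕ) : Inst S :=
  Inst.ofFacts (factSet Q.body (freezeVal W))

/-- A bijection `Val → Term` that inverts freezing on terms whose constants are below `W`;
nulls go to the constants `≥ W`, which such terms do not contain. -/
def unfreeze (W : ℕ) : Val → Term
  | .const c => if c < W then .const c else .var (c - W)
  | .null n => .const (n + W)

lemma unfreeze_injective (W : ℕ) : Function.Injective (unfreeze W) := by
  intro a b h
  cases a <;> cases b <;> simp only [unfreeze] at h <;> (try split_ifs at h) <;> simp_all <;> omega

lemma unfreeze_eval_freezeVal {W : ℕ} {u : Term} (hu : ∀ c, u = .const c → c < W) :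
    unfreeze W (u.eval (freezeVal W)) = u := by
  cases u with
  | var x => simp [Term.eval, freezeVal, unfreeze]
  | const c => simp [Term.eval, unfreeze, hu c rfl]

lemma eval_unfreeze {W : ℕ} {a : Val} (ha : a.IsConst) : (unfreeze W a).eval (freezeVal W) = a := by
  obtain ⟨c, rfl⟩ := ha
  by_cases hc : c < W
  · simp [unfreeze, hc, Term.eval]
  · simp only [unfreeze, hc, if_false, Term.eval, freezeVal, Val.const.injEq]
    omega

lemma subst_unfreeze {W : ℕ} {u : Term} (hu : ∀ c, u = .const c → c < W) (μ : ℕ → Val) :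
    u.subst (fun x => unfreeze W (μ x)) = unfreeze W (u.eval μ) := by
  cases u with
  | var x => rfl
  | const c => simp [Term.subst, Term.eval, unfreeze, hu c rfl]

lemma bodyHolds_canonInst (Q : CQNeq S k) (W : ℕ) :
    BodyHolds (freezeVal W) Q.body (Q.canonInst W) :=
  fun A hA => ⟨A, hA, rfl⟩

lemma CQNeq.canonInst_ground (Q : CQNeq S k) (W : ℕ) : (Q.canonInst W).Ground := by
  rintro r t ⟨A, -, hA⟩ i
  obtain ⟨rfl, h⟩ := Sigma.mk.inj_iff.1 hA
  rw [eq_of_heq h]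
  show ((A.args i).eval (freezeVal W)).IsConst
  cases A.args i
  exacts [⟨_, rfl⟩, ⟨_, rfl⟩]

lemma exists_mem_body_of_mem_canonInst {Q : CQNeq S k} {W : ℕ} {r : S.rel}
    {t : Fin (S.arity r) → Val} (ht : t ∈ (Q.canonInst W).rels r) :
    ∃ args : Fin (S.arity r) → Term, (⟨r, args⟩ : Atom S) ∈ Q.body ∧
      ∀ i, (args i).eval (freezeVal W) = t i := by
  obtain ⟨⟨r', args⟩, hA, h⟩ := ht
  obtain ⟨rfl, h⟩ := Sigma.mk.inj_iff.1 h
  exact ⟨args, hA, fun i => by rw [eq_of_heq h]⟩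

lemma homTo_unfreeze {Q : CQNeq S k} {W : ℕ} (hQ : ∀ c, Term.const c ∈ Q.terms → c < W)
    {B : List (Atom S)} (hB : ∀ c, Term.const c ∈ atomsTerms B → c < W) {g : ℕ → Val}
    (hg : BodyHolds g B (Q.canonInst W)) : homTo (fun x => unfreeze W (g x)) B Q := by
  intro A hA
  obtain ⟨args, hmem, hargs⟩ := exists_mem_body_of_mem_canonInst (hg A hA)
  suffices h : A.mapTerms (Term.subst fun x => unfreeze W (g x)) = ⟨A.rel, args⟩ from h ▸ hmem
  simp only [Atom.mapTerms, Atom.mk.injEq, heq_eq_eq, true_and]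
  funext i
  rw [subst_unfreeze (fun c hc => hB c ⟨A, hA, i, hc⟩), ← hargs i,
    unfreeze_eval_freezeVal (fun c hc => hQ c (Or.inr (Or.inl ⟨_, hmem, i, hc⟩)))]

lemma answer_subset_of_mem_answer_canonInst {Q : CQNeq S k} {Q2 : CQ S k} {W : ℕ}
    (hQ : ∀ c, Term.const c ∈ Q.terms → c < W)
    (hQ2 : ∀ c, Term.const c ∈ atomsTerms Q2.body ∪ Set.range Q2.head → c < W)
    (h : (fun i => (Q.head i).eval (freezeVal W)) ∈ Q2.answer (Q.canonInst W)) (I : Inst S) :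
    Q.answer I ⊆ Q2.answer I := by
  obtain ⟨g, hg, hhead⟩ := h
  refine answer_subset_of_mapsInto
    ⟨_, homTo_unfreeze hQ (fun c hc => hQ2 c (Or.inl hc)) hg, fun i => ?_⟩ I
  rw [subst_unfreeze (fun c hc => hQ2 c (Or.inr ⟨i, hc⟩)), ← congrFun hhead i,
    unfreeze_eval_freezeVal (fun c hc => hQ c (Or.inl ⟨i, hc⟩))]

/-! ### Normalization -/

lemma mem_swap_zipIdx {α : Type*} {l : List α} {j : ℕ} {a : α} :
    (j, a) ∈ l.zipIdx.map Prod.swap ↔ l[j]? = some a := by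
  simp only [List.mem_map, Prod.exists, Prod.swap_prod_mk, Prod.mk.injEq,
    List.mem_zipIdx_iff_getElem?]
  constructor
  · rintro ⟨a, j, h, rfl, rfl⟩
    exact h
  · exact fun h => ⟨a, j, h, rfl, rfl⟩

lemma Atom.argsList_getElem?_eq_some {A : Atom S} {i : ℕ} {u : Term} :
    A.argsList[i]? = some u ↔ ∃ hi : i < S.arity A.rel, A.args ⟨i, hi⟩ = u := by
  simp only [Atom.argsList, List.getElem?_ofFn, Option.dite_none_right_eq_some, Option.some.injEq]

lemma atomArg?_eq_some {B : List (Atom S)} {j i : ℕ} {u : Term} :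
    atomArg? B j i = some u ↔ ∃ A, B[j]? = some A ∧ A.argsList[i]? = some u := by
  unfold atomArg?
  cases B[j]? <;> simp

lemma atomArg?_of_getElem? {B : List (Atom S)} {j : ℕ} {A : Atom S} (hA : B[j]? = some A)
    (i : Fin (S.arity A.rel)) : atomArg? B j i = some (A.args i) :=
  atomArg?_eq_some.2 ⟨A, hA, Atom.argsList_getElem?_eq_some.2 ⟨i.isLt, rfl⟩⟩

lemma mem_atomsTerms_of_atomArg? {B : List (Atom S)} {j i : ℕ} {u : Term}
    (h : atomArg? B j i = some u) : u ∈ atomsTerms B := by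
  obtain ⟨A, hA, hu⟩ := atomArg?_eq_some.1 h
  obtain ⟨hi, rfl⟩ := Atom.argsList_getElem?_eq_some.1 hu
  exact ⟨A, List.mem_of_getElem? hA, _, rfl⟩

lemma mem_normBody {B : List (Atom S)} {A' : Atom S} :
    A' ∈ normBody B ↔ ∃ j A, B[j]? = some A ∧ A' = normAtom B j A := by
  rw [normBody, List.mem_map]
  constructor
  · rintro ⟨⟨j, A⟩, h, rfl⟩
    exact ⟨j, A, mem_swap_zipIdx.1 h, rfl⟩
  · rintro ⟨j, A, h, rfl⟩
    exact ⟨(j, A), mem_swap_zipIdx.2 h, rfl⟩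

lemma mem_normEqs {B : List (Atom S)} {p : Term × Term} :
    p ∈ normEqs B ↔ ∃ j i u, atomArg? B j i = some u ∧ isDup B j i = true ∧
      p = (freshVar j i, u.orig) := by
  rw [normEqs, List.mem_flatten]
  constructor
  · rintro ⟨l, hl, hp⟩
    obtain ⟨⟨j, A⟩, hA, rfl⟩ := List.mem_map.1 hl
    obtain ⟨⟨i, u⟩, hu, hif⟩ := List.mem_filterMap.1 hp
    split_ifs at hif with hd
    cases hif
    exact ⟨j, i, u, atomArg?_eq_some.2 ⟨A, mem_swap_zipIdx.1 hA, mem_swap_zipIdx.1 hu⟩, hd, rfl⟩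
  · rintro ⟨j, i, u, h, hd, rfl⟩
    obtain ⟨A, hA, hu⟩ := atomArg?_eq_some.1 h
    exact ⟨_, List.mem_map.2 ⟨(j, A), mem_swap_zipIdx.2 hA, rfl⟩,
      List.mem_filterMap.2 ⟨(i, u), mem_swap_zipIdx.2 hu, by simp [hd]⟩⟩

lemma exists_earlier_of_isDup {B : List (Atom S)} {j i : ℕ} (hd : isDup B j i = true) :
    ∃ u, atomArg? B j i = some u ∧
      ∃ j' i', (j' < j ∨ j' = j ∧ i' < i) ∧ atomArg? B j' i' = some u := by
  unfold isDup at hd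
  split at hd
  · cases hd
  · rename_i u hu
    simp only [List.any_eq_true, List.mem_range] at hd
    obtain ⟨j', -, hj'⟩ := hd
    split at hj'
    · cases hj'
    · rename_i A' hA'
      simp only [List.any_eq_true, List.mem_range, Bool.and_eq_true, Bool.or_eq_true,
        decide_eq_true_eq] at hj'
      obtain ⟨i', -, hord, hi'⟩ := hj'
      exact ⟨u, hu, j', i', hord, atomArg?_eq_some.2 ⟨A', hA', hi'⟩⟩

/-- The first occurrence of a term in a body is never a duplicate. -/
lemma exists_not_isDup {B : List (Atom S)} {u : Term} :
    ∀ j i, atomArg? B j i = some u → ∃ j' i', atomArg? B j' i' = some u ∧ isDup B j' i' = false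
  | j, i, h => by
    by_cases hd : isDup B j i
    · obtain ⟨u', hu', j', i', hord, h'⟩ := exists_earlier_of_isDup hd
      rw [h, Option.some.injEq] at hu'
      exact exists_not_isDup j' i' (hu' ▸ h')
    · exact ⟨j, i, h, by simpa using hd⟩
  termination_by j i => (j, i)
  decreasing_by exact Prod.Lex.toLex_lt_toLex.2 hord

lemma two_mul_mem_bodyVars_normBody {B : List (Atom S)} {x : ℕ} (hx : x ∈ BodyVars B) :
    2 * x ∈ BodyVars (normBody B) := by
  obtain ⟨A, hA, i, hi⟩ := hx
  obtain ⟨j, hj⟩ := List.mem_iff_getElem?.1 hA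
  obtain ⟨j', i', h', hd⟩ := exists_not_isDup j i (hi ▸ atomArg?_of_getElem? hj i)
  obtain ⟨A', hA', hu⟩ := atomArg?_eq_some.1 h'
  obtain ⟨hi', hu⟩ := Atom.argsList_getElem?_eq_some.1 hu
  refine ⟨normAtom B j' A', mem_normBody.2 ⟨j', A', hA', rfl⟩, ⟨i', hi'⟩, ?_⟩
  simp only [normAtom, hd, hu]
  rfl

lemma mem_bodyVars_of_two_mul_mem {B : List (Atom S)} {y : ℕ}
    (hy : 2 * y ∈ BodyVars (normBody B)) : y ∈ BodyVars B := by
  obtain ⟨A', hA', i, hi⟩ := hy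
  obtain ⟨j, A, hA, rfl⟩ := mem_normBody.1 hA'
  refine ⟨A, List.mem_of_getElem? hA, i, ?_⟩
  simp only [normAtom] at hi
  split_ifs at hi
  · simp only [freshVar, Term.var.injEq] at hi
    omega
  · cases h' : A.args i <;> simp only [h', Term.orig, reduceCtorEq, Term.var.injEq] at hi ⊢
    omega

lemma const_mem_atomsTerms_of_normBody {B : List (Atom S)} {c : ℕ}
    (hc : Term.const c ∈ atomsTerms (normBody B)) : Term.const c ∈ atomsTerms B := by
  obtain ⟨A', hA', i, hi⟩ := hc
  obtain ⟨j, A, hA, rfl⟩ := mem_normBody.1 hA'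
  refine ⟨A, List.mem_of_getElem? hA, i, ?_⟩
  simp only [normAtom] at hi
  split_ifs at hi
  · simp [freshVar] at hi
  · cases h' : A.args i <;> simp_all [Term.orig]

/-- The valuation of `normBody B` induced by a valuation `g` of `B`: the copy `2 * x` of a
variable takes the value `g x`, and the fresh variable of a duplicate occurrence takes the value
of the term it replaces. -/
def normVal (B : List (Atom S)) (g : ℕ → Val) (y : ℕ) : Val :=
  if y % 2 = 0 then g (y / 2)
  else ((atomArg? B (Nat.unpair (y / 2)).1 (Nat.unpair (y / 2)).2).map (Term.eval g)).getD (g 0)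

lemma normVal_two_mul (B : List (Atom S)) (g : ℕ → Val) (x : ℕ) : normVal B g (2 * x) = g x := by
  simp [normVal]

lemma eval_orig_normVal (B : List (Atom S)) (g : ℕ → Val) (u : Term) :
    u.orig.eval (normVal B g) = u.eval g := by
  simp only [Term.eval_orig, normVal_two_mul]

lemma Term.orig_eq_const {u : Term} {c : ℕ} : u.orig = .const c ↔ u = .const c := by
  cases u <;> simp [Term.orig]

lemma eval_normEqs_normVal {B : List (Atom S)} (g : ℕ → Val) {p : Term × Term}
    (hp : p ∈ normEqs B) : p.1.eval (normVal B g) = p.2.eval (normVal B g) := by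
  obtain ⟨j, i, u, h, -, rfl⟩ := mem_normEqs.1 hp
  have hodd : (2 * Nat.pair j i + 1) % 2 = 1 := by omega
  have hhalf : (2 * Nat.pair j i + 1) / 2 = Nat.pair j i := by omega
  show (freshVar j i).eval (normVal B g) = u.orig.eval (normVal B g)
  rw [eval_orig_normVal]
  simp [freshVar, Term.eval, normVal, hodd, hhalf, h]

lemma eval_normAtom_args {B : List (Atom S)} {j : ℕ} {A : Atom S} (hA : B[j]? = some A)
    {μ : ℕ → Val} (hμ : ∀ p ∈ normEqs B, p.1.eval μ = p.2.eval μ) (i : Fin (S.arity A.rel)) :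
    ((normAtom B j A).args i).eval μ = (A.args i).eval fun x => μ (2 * x) := by
  simp only [normAtom]
  split_ifs with hd
  · rw [hμ _ (mem_normEqs.2 ⟨j, i, A.args i, atomArg?_of_getElem? hA i, hd, rfl⟩), Term.eval_orig]
  · rw [Term.eval_orig]

lemma bodyHolds_of_normBody {B : List (Atom S)} {μ : ℕ → Val} {I : Inst S}
    (hB : BodyHolds μ (normBody B) I) (hE : ∀ p ∈ normEqs B, p.1.eval μ = p.2.eval μ) :
    BodyHolds (fun x => μ (2 * x)) B I := by
  intro A hA
  obtain ⟨j, hj⟩ := List.mem_iff_getElem?.1 hA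
  have h : (fun i : Fin (S.arity A.rel) => ((normAtom B j A).args i).eval μ) ∈ I.rels A.rel :=
    hB _ (mem_normBody.2 ⟨j, A, hj, rfl⟩)
  rwa [funext (eval_normAtom_args hj hE)] at h

lemma bodyHolds_normBody {B : List (Atom S)} {g : ℕ → Val} {I : Inst S} (hg : BodyHolds g B I) :
    BodyHolds (normVal B g) (normBody B) I := by
  intro A' hA'
  obtain ⟨j, A, hj, rfl⟩ := mem_normBody.1 hA'
  show (fun i : Fin (S.arity A.rel) => ((normAtom B j A).args i).eval (normVal B g)) ∈ I.rels A.rel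
  simpa only [eval_normAtom_args hj fun p hp => eval_normEqs_normVal g hp, normVal_two_mul]
    using hg A (List.mem_of_getElem? hj)

lemma homTo_normBody_unfreeze {Q : CQNeq S k} {W : ℕ} (hQ : ∀ c, Term.const c ∈ Q.terms → c < W)
    {B : List (Atom S)} (hB : ∀ c, Term.const c ∈ atomsTerms B → c < W) {g : ℕ → Val}
    (hg : BodyHolds g B (Q.canonInst W)) :
    homTo (fun y => unfreeze W (normVal B g y)) (normBody B) Q ∧
      ∀ p ∈ normEqs B, p.1.subst (fun y => unfreeze W (normVal B g y)) =
        p.2.subst (fun y => unfreeze W (normVal B g y)) := by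
  refine ⟨homTo_unfreeze hQ (fun c hc => hB c (const_mem_atomsTerms_of_normBody hc))
    (bodyHolds_normBody hg), fun p hp => ?_⟩
  obtain ⟨j, i, u, h, -, rfl⟩ := mem_normEqs.1 hp
  rw [subst_unfreeze (fun c hc => by simp [freshVar] at hc),
    subst_unfreeze (fun c hc => hB c (mem_atomsTerms_of_atomArg? (Term.orig_eq_const.1 hc ▸ h))),
    eval_normEqs_normVal g hp]

/-! ### Terminal leaves -/

lemma not_disjSat_neq {Q : CQNeq S k} (hQ : ∀ a, ¬ Q.hasDiseq a a) {h : ℕ → Term} {a b : Term}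
    (hab : a.subst h = b.subst h) (av : Set ℕ) : ¬ disjSat Q h av (.neq a b) := by
  rintro (⟨c, d, hc, hd, hcd⟩ | hdq)
  · rw [hab, hd, Term.const.injEq] at hc
    exact hcd hc.symm
  · rw [hab] at hdq
    exact hQ _ hdq

lemma exists_disjSat_of_gdepSteps_eq_empty {Q : CQNeq S k} (hQ : ∀ a, ¬ Q.hasDiseq a a)
    {B : List (Atom S)} {ds : List (GDisj S)}
    (hg : gdepSteps ⟨normBody B, ds ++ (normEqs B).map fun p => GDisj.neq p.1 p.2⟩ Q = ∅)
    {h : ℕ → Term} (hh : homTo h (normBody B) Q)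
    (hE : ∀ p ∈ normEqs B, p.1.subst h = p.2.subst h) :
    ∃ d ∈ ds, disjSat Q h (BodyVars (normBody B)) d := by
  by_contra hn
  push Not at hn
  refine (Set.eq_empty_iff_forall_notMem.1 hg) _ ⟨h, hh, fun d hd => ?_, rfl⟩
  rcases List.mem_append.1 hd with hd | hd
  · exact hn d hd
  · obtain ⟨p, hp, rfl⟩ := List.mem_map.1 hd
    exact not_disjSat_neq hQ (hE p hp) _

lemma not_const_mem_atomsTerms {B : List (Atom S)} (hB : ∀ A ∈ B, A.ConstantFree) (c : ℕ) :
    Term.const c ∉ atomsTerms B := by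
  rintro ⟨A, hA, j, hj⟩
  obtain ⟨x, hx⟩ := hB A hA j
  rw [hj] at hx
  cases hx

lemma bodyHolds_of_map_orig {B : List (Atom S)} {μ : ℕ → Val} {I : Inst S}
    (h : BodyHolds μ (B.map Atom.orig) I) : BodyHolds (fun x => μ (2 * x)) B I := by
  intro A hA
  have hA' := h _ (List.mem_map_of_mem hA)
  simp only [Atom.orig, Atom.mapTerms, Term.eval_orig] at hA'
  exact hA'

lemma eval_subst_unfreeze_normVal {Q : CQNeq S k} {W : ℕ} {B : List (Atom S)} {g : ℕ → Val}
    (hg : BodyHolds g B (Q.canonInst W)) {u : Term} (hu : ∀ x, u = .var x → x ∈ BodyVars B) :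
    (u.orig.subst fun y => unfreeze W (normVal B g y)).eval (freezeVal W) = u.eval g := by
  cases u with
  | var x =>
    show (unfreeze W (normVal B g (2 * x))).eval (freezeVal W) = g x
    rw [normVal_two_mul, eval_unfreeze ((Q.canonInst_ground W).isConst_of_bodyHolds hg (hu x rfl))]
  | const c => rfl

lemma Val.subst_toTerm {a : Val} (ha : a.IsConst) (f : ℕ → Term) : a.toTerm.subst f = a.toTerm := by
  obtain ⟨c, rfl⟩ := ha
  rfl

lemma Val.eval_toTerm {a : Val} (ha : a.IsConst) (μ : ℕ → Val) : a.toTerm.eval μ = a := by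
  obtain ⟨c, rfl⟩ := ha
  rfl

lemma TGD.holds_canonInst {Q : CQNeq S k} {W : ℕ} (hQ : ∀ c, Term.const c ∈ Q.terms → c < W)
    (hdne : ∀ a, ¬ Q.hasDiseq a a) {σ : TGD S} (hσ : Dep.ConstantFree (.tgd σ))
    (hg : gdepSteps σ.neqT Q = ∅) : σ.holds (Q.canonInst W) := by
  intro g hgB
  obtain ⟨hh, hE⟩ := homTo_normBody_unfreeze hQ
    (fun c hc => absurd hc (not_const_mem_atomsTerms hσ.1 c)) hgB
  obtain ⟨d, hd, hsat⟩ := exists_disjSat_of_gdepSteps_eq_empty hdne (ds := [_]) hg hh hE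
  rw [List.mem_singleton] at hd
  subst hd
  obtain ⟨h', hagree, hmap⟩ := hsat
  refine ⟨fun x => (h' (2 * x)).eval (freezeVal W), fun x hx => ?_,
    bodyHolds_of_map_orig ((show homTo h' _ Q from hmap).bodyHolds (bodyHolds_canonInst Q W))⟩
  show (h' (2 * x)).eval (freezeVal W) = g x
  rw [hagree _ (two_mul_mem_bodyVars_normBody hx)]
  exact eval_subst_unfreeze_normVal (u := .var x) hgB fun _ h => Term.var.inj h ▸ hx

lemma EGD.holds_canonInst {Q : CQNeq S k} {W : ℕ} (hQ : ∀ c, Term.const c ∈ Q.terms → c < W)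
    (hdne : ∀ a, ¬ Q.hasDiseq a a) {σ : EGD S} (hσ : Dep.ConstantFree (.egd σ))
    (hg : gdepSteps σ.neqT Q = ∅) : σ.holds (Q.canonInst W) := by
  intro g hgB
  obtain ⟨hh, hE⟩ := homTo_normBody_unfreeze hQ
    (fun c hc => absurd hc (not_const_mem_atomsTerms hσ c)) hgB
  obtain ⟨d, hd, hsat⟩ := exists_disjSat_of_gdepSteps_eq_empty hdne (ds := [_]) hg hh hE
  rw [List.mem_singleton] at hd
  subst hd
  have h := unfreeze_injective W (hsat _ (List.mem_singleton_self _))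
  simpa only [normVal_two_mul] using h

section TerminalLeaf

variable {M : MVSetting} {Q : CQNeq M.S k} {W : ℕ}

lemma MVSetting.answer_canonInst_subset (hleaf : M.qSteps k (some Q) = ∅)
    (hQ : ∀ c, Term.const c ∈ Q.terms → c < W) (hdne : ∀ a, ¬ Q.hasDiseq a a) {v : M.views.idx}
    (hV : ∀ c, Term.const c ∈ atomsTerms (M.views.defn v).body → c < W) :
    (M.views.defn v).answer (Q.canonInst W) ⊆ M.mv.rels v := by
  have hterm : ∀ C, C ∉ M.qSteps k (some Q) := fun C => hleaf ▸ Set.notMem_empty C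
  rintro _ ⟨g, hgB, rfl⟩
  obtain ⟨hh, hE⟩ := homTo_normBody_unfreeze hQ hV hgB
  rcases (M.mv.rels v).eq_empty_or_nonempty with hv0 | hne
  · obtain ⟨d, hd, -⟩ := exists_disjSat_of_gdepSteps_eq_empty hdne (ds := [])
      (Set.eq_empty_of_forall_notMem fun C hC => hterm C (Or.inr (Or.inr (Or.inl ⟨v, hv0, hC⟩))))
      hh hE
    cases hd
  rcases Nat.eq_zero_or_pos (M.views.arity v) with h0 | hpos
  · obtain ⟨tv, htv⟩ := hne
    suffices e : (fun i => ((M.views.defn v).head i).eval g) = tv from e ▸ htv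
    funext i
    exact absurd i.isLt (by omega)
  obtain ⟨tv, htv, hsat⟩ : ∃ tv ∈ M.mv.rels v, disjSat Q (fun y => unfreeze W (normVal _ g y))
      (BodyVars (normBody (M.views.defn v).body)) (.eqs (M.gnegdPairs v tv)) := by
    by_contra hn
    push Not at hn
    exact hterm _ (Or.inr (Or.inr (Or.inr ⟨v, hne, hpos, _, hh, hn,
      fun p hp => not_disjSat_neq hdne (hE p hp) _, rfl⟩)))
  suffices e : (fun i => ((M.views.defn v).head i).eval g) = tv from e ▸ htv
  funext i
  have h := congrArg (Term.eval (freezeVal W)) (hsat _ (List.mem_ofFn.2 ⟨i, rfl⟩))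
  rwa [eval_subst_unfreeze_normVal hgB fun x hx => (M.views.safe v).2 x ⟨i, hx⟩,
    Val.subst_toTerm (M.mvGround v tv htv i), Val.eval_toTerm (M.mvGround v tv htv i)] at h

lemma MVSetting.validBase_canonInst (hleaf : M.qSteps k (some Q) = ∅)
    (hQ : ∀ c, Term.const c ∈ Q.terms → c < W) (hdne : ∀ a, ¬ Q.hasDiseq a a)
    (hV : ∀ v c, Term.const c ∈ atomsTerms (M.views.defn v).body → c < W)
    (hMV : ∀ v, ∀ tv ∈ M.mv.rels v,
      MapsInto (M.views.defn v).body (M.views.defn v).head (fun i => (tv i).toTerm) Q) :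
    M.ValidBase (Q.canonInst W) := by
  have hterm : ∀ C, C ∉ M.qSteps k (some Q) := fun C => hleaf ▸ Set.notMem_empty C
  refine ⟨Q.canonInst_ground W, fun d hd => ?_, fun v => ?_⟩
  · cases d with
    | tgd σ =>
      exact TGD.holds_canonInst hQ hdne (M.depsConstantFree _ hd)
        (Set.eq_empty_of_forall_notMem fun C hC => hterm C (Or.inl ⟨σ, hd, hC⟩))
    | egd σ =>
      exact EGD.holds_canonInst hQ hdne (M.depsConstantFree _ hd)
        (Set.eq_empty_of_forall_notMem fun C hC => hterm C (Or.inr (Or.inl ⟨σ, hd, hC⟩)))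
  refine (M.answer_canonInst_subset hleaf hQ hdne (hV v)).antisymm fun tv htv => ?_
  have e : (fun i => (tv i).toTerm.eval (freezeVal W)) = tv :=
    funext fun i => Val.eval_toTerm (M.mvGround v tv htv i) _
  exact e ▸ (hMV v tv htv).mem_answer (bodyHolds_canonInst Q W)

end TerminalLeaf

/-! ### Chase steps -/

open Classical in
noncomputable def freshExt (h : ℕ → Term) (av : Set ℕ) (V : ℕ) (x : ℕ) : Term :=
  if x ∈ av then h x else .var (V + x)

lemma exAtomsChild_freshExt {Q : CQNeq S k} {V : ℕ} (hV : ∀ u ∈ Q.terms, u.idx < V)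
    (h : ℕ → Term) (av : Set ℕ) (ψ : List (Atom S)) :
    exAtomsChild Q h av ψ
      ⟨Q.head, Q.body ++ ψ.map (Atom.mapTerms (Term.subst (freshExt h av V))), Q.diseqs⟩ := by
  refine ⟨_, fun x hx => if_pos hx, fun x _ hx => ⟨V + x, if_neg hx, fun hmem => ?_⟩,
    fun x hx y hy hxy => ?_, rfl⟩
  · exact absurd (hV _ hmem) (by simp [Term.idx])
  · simp only [if_neg hx.2, if_neg hy.2, Term.var.injEq] at hxy
    omega

lemma exists_mem_disjChild_of_not_disjFails {Q : CQNeq S k} {h : ℕ → Term} {av : Set ℕ}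
    {d : GDisj S} (hd : ¬ disjFails Q h d) : ∃ o, o ∈ disjChild Q h av d := by
  cases d with
  | exAtoms ψ =>
    obtain ⟨V, hV⟩ := exists_idx_bound Q.terms_finite
    exact ⟨_, _, rfl, exAtomsChild_freshExt hV h av ψ⟩
  | eqs L =>
    obtain ⟨Q', hQ'⟩ := not_not.1 hd
    exact ⟨_, Q', rfl, hQ'⟩
  | neq a b => exact ⟨_, _, rfl, hd, rfl⟩

lemma gdepResults_nonempty (g : GDep S) (Q : CQNeq S k) (h : ℕ → Term) :
    (gdepResults g Q h).Nonempty := by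
  by_cases hall : ∀ d ∈ g.disjs, disjFails Q h d
  · exact ⟨none, Or.inr ⟨rfl, hall⟩⟩
  push Not at hall
  obtain ⟨d, hd, hnf⟩ := hall
  obtain ⟨o, ho⟩ := exists_mem_disjChild_of_not_disjFails (av := BodyVars g.ante) hnf
  exact ⟨o, Or.inl ⟨d, hd, ho⟩⟩

lemma MVSetting.nonempty_of_mem_qSteps {M : MVSetting} {o : Option (CQNeq M.S k)}
    {C : Set (Option (CQNeq M.S k))} (hC : C ∈ M.qSteps k o) : C.Nonempty := by
  cases o with
  | none => exact absurd hC (Set.notMem_empty C)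
  | some Q =>
    rcases hC with ⟨-, -, h, -, -, rfl⟩ | ⟨-, -, h, -, -, rfl⟩ | ⟨-, -, h, -, -, rfl⟩ |
      ⟨v, -, -, h, -, -, -, rfl⟩
    iterate 3 exact gdepResults_nonempty _ _ _
    by_cases hall : (∀ t ∈ M.mv.rels v, disjFails Q h (.eqs (M.gnegdPairs v t))) ∧
        ∀ p ∈ normEqs (M.views.defn v).body, disjFails Q h (.neq p.1 p.2)
    · exact ⟨none, Or.inr (Or.inr ⟨rfl, hall⟩)⟩
    rw [not_and_or] at hall
    push Not at hall
    rcases hall with ⟨t, ht, hnf⟩ | ⟨p, hp, hnf⟩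
    · obtain ⟨o, ho⟩ := exists_mem_disjChild_of_not_disjFails
        (av := BodyVars (normBody (M.views.defn v).body)) hnf
      exact ⟨o, Or.inl ⟨t, ht, ho⟩⟩
    · obtain ⟨o, ho⟩ := exists_mem_disjChild_of_not_disjFails
        (av := BodyVars (normBody (M.views.defn v).body)) hnf
      exact ⟨o, Or.inr (Or.inl ⟨p, hp, ho⟩)⟩

lemma disjChild_cases {Q Q' : CQNeq S k} {h : ℕ → Term} {av : Set ℕ} {d : GDisj S}
    (hd : some Q' ∈ disjChild Q h av d) :
    (∃ θ : Term → Term, (∀ c, θ (.const c) = .const c) ∧ Q' = Q.mapTerms θ) ∨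
      (Q'.head = Q.head ∧ ∀ A ∈ Q.body, A ∈ Q'.body) := by
  cases d with
  | exAtoms ψ =>
    obtain ⟨_, ⟨⟩, -, -, -, -, rfl⟩ := hd
    exact Or.inr ⟨rfl, fun A hA => List.mem_append_left _ hA⟩
  | eqs L =>
    obtain ⟨_, ⟨⟩, -, θ, hθ, -, -, -, rfl⟩ := hd
    exact Or.inl ⟨θ, hθ, rfl⟩
  | neq a b =>
    obtain ⟨_, ⟨⟩, -, rfl⟩ := hd
    exact Or.inr ⟨rfl, fun A hA => hA⟩

lemma exists_disjChild_of_mem_gdepResults {g : GDep S} {Q Q' : CQNeq S k} {h : ℕ → Term}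
    (hQ' : some Q' ∈ gdepResults g Q h) :
    ∃ d ∈ g.disjs, some Q' ∈ disjChild Q h (BodyVars g.ante) d := by
  rcases hQ' with hd | ⟨⟨⟩, -⟩
  exact hd

lemma MVSetting.qStep_cases {M : MVSetting} {Q Q' : CQNeq M.S k}
    (hs : M.qStep k (some Q) (some Q')) :
    (∃ θ : Term → Term, (∀ c, θ (.const c) = .const c) ∧ Q' = Q.mapTerms θ) ∨
      (Q'.head = Q.head ∧ ∀ A ∈ Q.body, A ∈ Q'.body) := by
  obtain ⟨C, hC, hQ'⟩ := hs
  rcases hC with ⟨_, -, h, -, -, rfl⟩ | ⟨_, -, h, -, -, rfl⟩ | ⟨_, -, h, -, -, rfl⟩ |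
    ⟨v, -, -, h, -, -, -, rfl⟩
  iterate 3 exact disjChild_cases (exists_disjChild_of_mem_gdepResults hQ').choose_spec.2
  rcases hQ' with ⟨_, -, hd⟩ | ⟨_, -, hd⟩ | ⟨⟨⟩, -⟩ <;> exact disjChild_cases hd

def MVSetting.ExpansionMapsInto (M : MVSetting) (Q1 : CQ M.S k) (Q : CQNeq M.S k) : Prop :=
  MapsInto Q1.body Q1.head Q.head Q ∧
    ∀ v, ∀ tv ∈ M.mv.rels v,
      MapsInto (M.views.defn v).body (M.views.defn v).head (fun i => (tv i).toTerm) Q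

lemma MVSetting.IsMSExpansion.expansionMapsInto {M : MVSetting} {Q1 : CQ M.S k}
    {Q1' : CQNeq M.S k} (hexp : M.IsMSExpansion Q1 Q1') : M.ExpansionMapsInto Q1 Q1' := by
  obtain ⟨hhead, -, ν, hνhead, -, -, hbody⟩ := hexp
  have hmem : ∀ A, A ∈ Q1.body ∨ (∃ v, ∃ t ∈ M.mv.rels v, ∃ A0 ∈ (M.views.defn v).body,
      A = A0.mapTerms (Term.subst (ν v t))) → A ∈ Q1'.body :=
    fun A hA => (Set.ext_iff.1 hbody A).2 hA
  refine ⟨⟨Term.var, fun A hA => ?_, fun i => by rw [hhead, Term.subst_var]⟩,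
    fun v tv htv => ⟨ν v tv, fun A hA => hmem _ (Or.inr ⟨v, tv, htv, A, hA, rfl⟩), hνhead v tv htv⟩⟩
  rw [Atom.mapTerms_subst_var]
  exact hmem A (Or.inl hA)

lemma MVSetting.ExpansionMapsInto.qStep {M : MVSetting} {Q1 : CQ M.S k} {Q Q' : CQNeq M.S k}
    (h : M.ExpansionMapsInto Q1 Q) (hs : M.qStep k (some Q) (some Q')) :
    M.ExpansionMapsInto Q1 Q' := by
  rcases M.qStep_cases hs with ⟨θ, hθ, rfl⟩ | ⟨hhead, hsub⟩
  · refine ⟨h.1.mapTerms hθ, fun v tv htv => ?_⟩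
    have e : (fun i => θ (tv i).toTerm) = fun i => (tv i).toTerm := funext fun i => by
      obtain ⟨c, hc⟩ := M.mvGround v tv htv i
      rw [hc]
      exact hθ c
    exact e ▸ (h.2 v tv htv).mapTerms hθ
  · exact ⟨hhead ▸ h.1.mono hsub, fun v tv htv => (h.2 v tv htv).mono hsub⟩

def CQNeq.Sat (Q : CQNeq S k) (I : Inst S) (μ : ℕ → Val) : Prop :=
  BodyHolds μ Q.body I ∧ ∀ p ∈ Q.diseqs, p.1.eval μ ≠ p.2.eval μ

namespace CQNeq.Sat

variable {Q : CQNeq S k} {I : Inst S} {μ : ℕ → Val}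

lemma not_hasDiseq (hμ : Q.Sat I μ) {a b : Term} (hab : a.eval μ = b.eval μ) :
    ¬ Q.hasDiseq a b := by
  rintro (hp | hp)
  exacts [hμ.2 _ hp hab, hμ.2 _ hp hab.symm]

lemma exists_neqChild (hμ : Q.Sat I μ) {h : ℕ → Term} {a b : Term}
    (hab : (a.subst h).eval μ ≠ (b.subst h).eval μ) :
    ∃ Q', neqChild Q h a b Q' ∧ (fun i => (Q.head i).eval μ) ∈ Q'.answer I := by
  refine ⟨_, ⟨fun he => hab (by rw [he]), rfl⟩, μ, hμ.1, fun p hp => ?_, rfl⟩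
  rcases List.mem_append.1 hp with hp | hp
  · exact hμ.2 p hp
  · rw [List.mem_singleton.1 hp]
    exact hab

lemma mapTerms_answer (hμ : Q.Sat I μ) {θ : Term → Term} (hθ : ∀ u, (θ u).eval μ = u.eval μ) :
    (fun i => (Q.head i).eval μ) ∈ (Q.mapTerms θ).answer I := by
  refine ⟨μ, fun A hA => ?_, fun p hp => ?_, funext fun i => (hθ _).symm⟩
  · obtain ⟨A, hA', rfl⟩ := List.mem_map.1 hA
    show (fun i => (θ (A.args i)).eval μ) ∈ I.rels A.rel
    simpa only [hθ] using hμ.1 A hA'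
  · obtain ⟨p, hp', rfl⟩ := List.mem_map.1 hp
    simpa only [hθ] using hμ.2 p hp'

/-- Equalities holding under `μ` are realized by sending each left-hand side to its right-hand
side, provided no right-hand side is rewritten in turn and constants are only sent to
themselves. -/
lemma exists_eqsChild (hμ : Q.Sat I μ) {h : ℕ → Term} {L : List (Term × Term)}
    (hL : ∀ p ∈ L, (p.1.subst h).eval μ = (p.2.subst h).eval μ)
    (hfix : ∀ p ∈ L, ∀ q ∈ L, q.1.subst h = p.1.subst h ∨ q.1.subst h = p.2.subst h →
      q.2.subst h = p.2.subst h)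
    (hconst : ∀ p ∈ L, ∀ c, p.1.subst h = .const c → p.2.subst h = .const c) :
    ∃ Q', eqsChild Q h L Q' ∧ (fun i => (Q.head i).eval μ) ∈ Q'.answer I := by
  classical
  let θ : Term → Term := fun u =>
    if hu : ∃ p ∈ L, u = p.1.subst h then hu.choose.2.subst h else u
  have hθ : ∀ p ∈ L, θ (p.1.subst h) = p.2.subst h := by
    intro p hp
    have hu : ∃ q ∈ L, p.1.subst h = q.1.subst h := ⟨p, hp, rfl⟩
    simp only [θ, dif_pos hu]
    exact hfix p hp _ hu.choose_spec.1 (Or.inl hu.choose_spec.2.symm)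
  have hθ_of_not : ∀ u, (¬ ∃ p ∈ L, u = p.1.subst h) → θ u = u := fun u hu => dif_neg hu
  have hθ_rhs : ∀ p ∈ L, θ (p.2.subst h) = p.2.subst h := by
    intro p hp
    by_cases hu : ∃ q ∈ L, p.2.subst h = q.1.subst h
    · obtain ⟨q, hq, he⟩ := hu
      rw [he, hθ q hq, ← he]
      exact hfix p hp q hq (Or.inr he.symm)
    · exact hθ_of_not _ hu
  have hθ_eval : ∀ u, (θ u).eval μ = u.eval μ := by
    intro u
    by_cases hu : ∃ p ∈ L, u = p.1.subst h
    · obtain ⟨p, hp, rfl⟩ := hu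
      rw [hθ p hp, hL p hp]
    · rw [hθ_of_not u hu]
  have hθ_const : ∀ c, θ (.const c) = .const c := by
    intro c
    by_cases hu : ∃ p ∈ L, Term.const c = p.1.subst h
    · obtain ⟨p, hp, he⟩ := hu
      rw [he, hθ p hp, ← he]
      exact hconst p hp c he.symm
    · exact hθ_of_not _ hu
  refine ⟨_, ⟨fun p hp => hμ.not_hasDiseq (hL p hp), θ, hθ_const,
    fun u hu => hθ_of_not u fun ⟨p, hp, he⟩ => (hu p hp).1 he,
    fun p hp => by rw [hθ p hp, hθ_rhs p hp], fun u => ?_, rfl⟩,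
    hμ.mapTerms_answer hθ_eval⟩
  by_cases hu : ∃ p ∈ L, u = p.1.subst h
  · obtain ⟨p, hp, rfl⟩ := hu
    exact Or.inr ⟨p, hp, rfl⟩
  · exact Or.inl (hθ_of_not u hu)

lemma _root_.CertainViews.eqsChild_singleton_swap {Q Q' : CQNeq S k} {h : ℕ → Term} {a b : Term}
    (hQ' : eqsChild Q h [(a, b)] Q') : eqsChild Q h [(b, a)] Q' := by
  obtain ⟨hnd, θ, hc, hid, heq, hrange, rfl⟩ := hQ'
  have heq' : θ (a.subst h) = θ (b.subst h) := heq _ (List.mem_singleton_self _)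
  refine ⟨fun p hp => ?_, θ, hc, fun u hu => hid u fun p hp => ?_, fun p hp => ?_, fun u => ?_, rfl⟩
  · rw [List.mem_singleton.1 hp]
    exact fun hd => hnd _ (List.mem_singleton_self _) (Or.symm hd)
  · rw [List.mem_singleton.1 hp]
    exact (hu _ (List.mem_singleton_self _)).symm
  · rw [List.mem_singleton.1 hp]
    exact heq'.symm
  · rcases hrange u with h' | ⟨p, hp, h'⟩
    · exact Or.inl h'
    · rw [List.mem_singleton.1 hp] at h'
      exact Or.inr ⟨_, List.mem_singleton_self _, h'.trans heq'⟩

lemma exists_eqsChild_singleton (hμ : Q.Sat I μ) {h : ℕ → Term} {a b : Term}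
    (hab : (a.subst h).eval μ = (b.subst h).eval μ) :
    ∃ Q', eqsChild Q h [(a, b)] Q' ∧ (fun i => (Q.head i).eval μ) ∈ Q'.answer I := by
  have horiented : ∀ a b : Term, (a.subst h).eval μ = (b.subst h).eval μ →
      (∀ c, a.subst h = .const c → b.subst h = .const c) →
      ∃ Q', eqsChild Q h [(a, b)] Q' ∧ (fun i => (Q.head i).eval μ) ∈ Q'.answer I :=
    fun a b hab hc => hμ.exists_eqsChild (by simpa using hab) (by simp) (by simpa using hc)
  by_cases hc : ∀ c, a.subst h = .const c → b.subst h = .const c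
  · exact horiented a b hab hc
  push Not at hc
  obtain ⟨c, hac, hbc⟩ := hc
  obtain ⟨Q', hQ', hans⟩ := horiented b a hab.symm fun d hbd => by
    rw [hac, hbd, Term.eval, Term.eval, Val.const.injEq] at hab
    exact absurd (hab ▸ hbd) hbc
  exact ⟨Q', eqsChild_singleton_swap hQ', hans⟩

lemma exists_eqsChild_of_const_rhs (hμ : Q.Sat I μ) {h : ℕ → Term} {L : List (Term × Term)}
    (hL : ∀ p ∈ L, (p.1.subst h).eval μ = (p.2.subst h).eval μ)
    (hrhs : ∀ p ∈ L, ∃ c, p.2.subst h = .const c) :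
    ∃ Q', eqsChild Q h L Q' ∧ (fun i => (Q.head i).eval μ) ∈ Q'.answer I := by
  have hdet : ∀ u u' : Term, (∃ c, u = .const c) → (∃ c, u' = .const c) →
      u.eval μ = u'.eval μ → u = u' := by
    rintro _ _ ⟨c, rfl⟩ ⟨d, rfl⟩ h
    rw [Term.eval, Term.eval, Val.const.injEq] at h
    rw [h]
  refine hμ.exists_eqsChild hL (fun p hp q hq hqp => hdet _ _ (hrhs q hq) (hrhs p hp) ?_)
    (fun p hp c hc => hdet _ _ (hrhs p hp) ⟨c, rfl⟩ (by rw [← hL p hp, hc]))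
  rw [← hL q hq]
  rcases hqp with e | e <;> rw [e]
  exact hL p hp

lemma neqChild_or_bodyHolds (hμ : Q.Sat I μ) {B : List (Atom S)} {h : ℕ → Term}
    (hh : homTo h (normBody B) Q) :
    (∃ p ∈ normEqs B, ∃ Q', neqChild Q h p.1 p.2 Q' ∧
      (fun i => (Q.head i).eval μ) ∈ Q'.answer I) ∨
      BodyHolds (fun x => (h (2 * x)).eval μ) B I := by
  by_cases hE : ∀ p ∈ normEqs B, (p.1.subst h).eval μ = (p.2.subst h).eval μ
  · exact Or.inr (bodyHolds_of_normBody (hh.bodyHolds hμ.1)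
      fun p hp => by simpa only [Term.eval_subst] using hE p hp)
  push Not at hE
  obtain ⟨p, hp, hne⟩ := hE
  exact Or.inl ⟨p, hp, hμ.exists_neqChild hne⟩

lemma exists_exAtomsChild (hμ : Q.Sat I μ) {B ψ : List (Atom S)} (hψ : ∀ A ∈ ψ, A.ConstantFree)
    {h : ℕ → Term} (hh : homTo h (normBody B) Q) {ν : ℕ → Val}
    (hν : ∀ x ∈ BodyVars B, ν x = (h (2 * x)).eval μ) (hψν : BodyHolds ν ψ I) :
    ∃ Q', exAtomsChild Q h (BodyVars (normBody B)) (ψ.map Atom.orig) Q' ∧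
      (fun i => (Q.head i).eval μ) ∈ Q'.answer I := by
  obtain ⟨V, hV⟩ := exists_idx_bound Q.terms_finite
  let μ' : ℕ → Val := fun z => if z < V then μ z else ν ((z - V) / 2)
  have hagree : ∀ u ∈ Q.terms, u.eval μ' = u.eval μ := by
    intro u hu
    cases u with
    | var z => exact if_pos (hV _ hu)
    | const c => rfl
  have hnew : ∀ y, (freshExt h (BodyVars (normBody B)) V (2 * y)).eval μ' = ν y := by
    intro y
    by_cases hy : 2 * y ∈ BodyVars (normBody B)
    · rw [freshExt, if_pos hy, hagree _ (atomsTerms_subset_terms Q (hh.mem_atomsTerms hy)),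
        hν y (mem_bodyVars_of_two_mul_mem hy)]
    · rw [freshExt, if_neg hy]
      show (if V + 2 * y < V then _ else _) = _
      rw [if_neg (by omega), Nat.add_sub_cancel_left, Nat.mul_div_cancel_left _ two_pos]
  refine ⟨_, exAtomsChild_freshExt hV h _ _, μ', fun A hA => ?_, fun p hp => ?_,
    funext fun i => (hagree _ (Or.inl ⟨i, rfl⟩)).symm⟩
  · rcases List.mem_append.1 hA with hA | hA
    · have e : ∀ i, (A.args i).eval μ' = (A.args i).eval μ :=
        fun i => hagree _ (Or.inr (Or.inl ⟨A, hA, i, rfl⟩))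
      simpa only [e] using hμ.1 A hA
    obtain ⟨_, hA1, rfl⟩ := List.mem_map.1 hA
    obtain ⟨A0, hA0, rfl⟩ := List.mem_map.1 hA1
    have e : ∀ i, ((A0.args i).orig.subst (freshExt h (BodyVars (normBody B)) V)).eval μ' =
        (A0.args i).eval ν := by
      intro i
      obtain ⟨y, hy⟩ := hψ A0 hA0 i
      rw [hy]
      exact hnew y
    show (fun i => ((A0.args i).orig.subst (freshExt h (BodyVars (normBody B)) V)).eval μ') ∈
      I.rels A0.rel
    simpa only [e] using hψν A0 hA0
  · rw [hagree _ (Or.inr (Or.inr ⟨p, hp, Or.inl rfl⟩)),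
      hagree _ (Or.inr (Or.inr ⟨p, hp, Or.inr rfl⟩))]
    exact hμ.2 p hp

end CQNeq.Sat

lemma MVSetting.exists_child_answer {M : MVSetting} {I : Inst M.S} (hI : M.ValidBase I)
    {t : Fin k → Val} {Q : CQNeq M.S k} (ht : t ∈ Q.answer I) {C : Set (Option (CQNeq M.S k))}
    (hC : C ∈ M.qSteps k (some Q)) : ∃ Q', some Q' ∈ C ∧ t ∈ Q'.answer I := by
  obtain ⟨μ, hb, hd, rfl⟩ := ht
  have hμ : Q.Sat I μ := ⟨hb, hd⟩
  rcases hC with ⟨σ, hσ, h, hh, -, rfl⟩ | ⟨σ, hσ, h, hh, -, rfl⟩ | ⟨v, hv, h, hh, -, rfl⟩ |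
    ⟨v, -, -, h, hh, -, -, rfl⟩
  · rcases hμ.neqChild_or_bodyHolds hh with ⟨p, hp, Q', hQ', hans⟩ | hB
    · exact ⟨Q', Or.inl ⟨_, List.mem_cons_of_mem _ (List.mem_map_of_mem hp), Q', rfl, hQ'⟩, hans⟩
    obtain ⟨ν, hν, hνψ⟩ := hI.2.1 _ hσ _ hB
    obtain ⟨Q', hQ', hans⟩ := hμ.exists_exAtomsChild (M.depsConstantFree _ hσ).2 hh hν hνψ
    exact ⟨Q', Or.inl ⟨_, List.mem_cons_self, Q', rfl, hQ'⟩, hans⟩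
  · rcases hμ.neqChild_or_bodyHolds hh with ⟨p, hp, Q', hQ', hans⟩ | hB
    · exact ⟨Q', Or.inl ⟨_, List.mem_cons_of_mem _ (List.mem_map_of_mem hp), Q', rfl, hQ'⟩, hans⟩
    obtain ⟨Q', hQ', hans⟩ := hμ.exists_eqsChild_singleton (a := (Term.var σ.lhs).orig)
      (b := (Term.var σ.rhs).orig) (hI.2.1 _ hσ _ hB)
    exact ⟨Q', Or.inl ⟨_, List.mem_cons_self, Q', rfl, hQ'⟩, hans⟩
  · rcases hμ.neqChild_or_bodyHolds hh with ⟨p, hp, Q', hQ', hans⟩ | hB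
    · exact ⟨Q', Or.inl ⟨_, List.mem_map_of_mem hp, Q', rfl, hQ'⟩, hans⟩
    have hmem : _ ∈ (M.views.defn v).answer I := ⟨_, hB, rfl⟩
    rw [hI.2.2 v, hv] at hmem
    exact hmem.elim
  · rcases hμ.neqChild_or_bodyHolds hh with ⟨p, hp, Q', hQ', hans⟩ | hB
    · exact ⟨Q', Or.inr (Or.inl ⟨p, hp, Q', rfl, hQ'⟩), hans⟩
    set tv := fun i => ((M.views.defn v).head i).eval fun x => (h (2 * x)).eval μ
    have htv : tv ∈ M.mv.rels v := hI.2.2 v ▸ ⟨_, hB, rfl⟩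
    have hL : ∀ p ∈ M.gnegdPairs v tv, (p.1.subst h).eval μ = (p.2.subst h).eval μ := by
      intro p hp
      obtain ⟨i, rfl⟩ := List.mem_ofFn.1 hp
      rw [Val.subst_toTerm (M.mvGround v tv htv i), Val.eval_toTerm (M.mvGround v tv htv i),
        Term.eval_subst, Term.eval_orig]
    have hrhs : ∀ p ∈ M.gnegdPairs v tv, ∃ c, p.2.subst h = .const c := by
      intro p hp
      obtain ⟨i, rfl⟩ := List.mem_ofFn.1 hp
      obtain ⟨c, hc⟩ := M.mvGround v tv htv i
      exact ⟨c, by rw [Val.subst_toTerm (M.mvGround v tv htv i), hc]; rfl⟩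
    obtain ⟨Q', hQ', hans⟩ := hμ.exists_eqsChild_of_const_rhs hL hrhs
    exact ⟨Q', Or.inl ⟨tv, htv, Q', rfl, hQ'⟩, hans⟩

/-! ### Chase trees -/

namespace RTree

variable {β : Type} {D : β → Set (Set β)}

lemma mem_leavesL {x : β} : ∀ {ts : List (RTree β)}, x ∈ leavesL ts ↔ ∃ t ∈ ts, x ∈ t.leaves
  | [] => by simp [leavesL]
  | t :: ts => by simp [leavesL, mem_leavesL (ts := ts)]

lemma mem_leaves_node {x b : β} {ts : List (RTree β)} :
    x ∈ (node b ts).leaves ↔ (ts = [] ∧ x = b) ∨ ∃ t ∈ ts, x ∈ t.leaves := by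
  cases ts with
  | nil => simp [leaves]
  | cons t ts => simp [leaves, mem_leavesL]

lemma ValidL.valid : ∀ {ts : List (RTree β)}, ValidL D ts → ∀ t ∈ ts, Valid D t
  | _ :: _, h, _, .head _ => h.1
  | _ :: _, h, t, .tail _ ht => ValidL.valid h.2 t ht

lemma Valid.eq_empty_of_mem_leaves (hD : ∀ a, ∀ C ∈ D a, C.Nonempty) :
    ∀ {t : RTree β}, Valid D t → ∀ x ∈ t.leaves, D x = ∅
  | node b ts, hv, x, hx => by
    rw [Valid] at hv
    rcases hv with ⟨hb, rfl⟩ | ⟨C, hC, hts, hvts⟩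
    · rcases mem_leaves_node.1 hx with ⟨-, rfl⟩ | ⟨_, ⟨⟩, _⟩
      exact hb
    rcases mem_leaves_node.1 hx with ⟨rfl, -⟩ | ⟨t, ht, hxt⟩
    · obtain ⟨_, t, ⟨⟩, _⟩ := hts ▸ hD b C hC
    · exact Valid.eq_empty_of_mem_leaves hD (hvts.valid t ht) x hxt
  termination_by t => sizeOf t
  decreasing_by
    have := List.sizeOf_lt_of_mem ht
    simp only [node.sizeOf_spec]
    omega

lemma Valid.forall_mem_leaves (P : β → Prop) (hP : ∀ a, P a → ∀ C ∈ D a, ∀ b ∈ C, P b) :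
    ∀ {t : RTree β}, Valid D t → P t.label → ∀ x ∈ t.leaves, P x
  | node b ts, hv, hb, x, hx => by
    rw [Valid] at hv
    rcases mem_leaves_node.1 hx with ⟨-, rfl⟩ | ⟨t, ht, hxt⟩
    · exact hb
    rcases hv with ⟨-, rfl⟩ | ⟨C, hC, hts, hvts⟩
    · cases ht
    exact Valid.forall_mem_leaves P hP (hvts.valid t ht)
      (hP b hb C hC _ (hts ▸ ⟨t, ht, rfl⟩)) x hxt
  termination_by t => sizeOf t
  decreasing_by
    have := List.sizeOf_lt_of_mem ht
    simp only [node.sizeOf_spec]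
    omega

lemma Valid.exists_mem_leaves (P : β → Prop) (hP : ∀ a, P a → ∀ C ∈ D a, ∃ b ∈ C, P b) :
    ∀ {t : RTree β}, Valid D t → P t.label → ∃ x ∈ t.leaves, P x
  | node b ts, hv, hb => by
    rw [Valid] at hv
    rcases hv with ⟨-, rfl⟩ | ⟨C, hC, hts, hvts⟩
    · exact ⟨b, mem_leaves_node.2 (Or.inl ⟨rfl, rfl⟩), hb⟩
    obtain ⟨_, hc, hPc⟩ := hP b hb C hC
    obtain ⟨t, ht, rfl⟩ := hts ▸ hc
    obtain ⟨x, hx, hPx⟩ := Valid.exists_mem_leaves P hP (hvts.valid t ht) hPc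
    exact ⟨x, mem_leaves_node.2 (Or.inr ⟨t, ht, hx⟩), hPx⟩
  termination_by t => sizeOf t
  decreasing_by
    have := List.sizeOf_lt_of_mem ht
    simp only [node.sizeOf_spec]
    omega

end RTree

/-! ### Expansions and chase results -/

lemma MVSetting.IsMSExpansion.exists_bodyHolds {M : MVSetting} {Q1 : CQ M.S k}
    {Q1' : CQNeq M.S k} (hexp : M.IsMSExpansion Q1 Q1') {I : Inst M.S}
    (hMV : ∀ v, M.mv.rels v ⊆ (M.views.defn v).answer I) {ν0 : ℕ → Val}
    (hν0 : BodyHolds ν0 Q1.body I) :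
    ∃ μ, BodyHolds μ Q1'.body I ∧ ∀ y ∈ BodyVars Q1.body, μ y = ν0 y := by
  obtain ⟨-, -, ν, hνhead, hνfresh, hνinj, hbody⟩ := hexp
  choose w hw hwhead using fun v tv (htv : tv ∈ M.mv.rels v) => hMV v htv
  let Renames (v : M.views.idx) (tv : Fin (M.views.arity v) → Val) (x y : ℕ) : Prop :=
    x ∈ BodyVars (M.views.defn v).body ∧ (¬ ∃ i, (M.views.defn v).head i = .var x) ∧
      ν v tv x = .var y
  -- the renaming apart of the nonhead variables makes these constraints consistent
  have hval : ∀ y, ∃ a : Val,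
      (∀ v tv (htv : tv ∈ M.mv.rels v) x, Renames v tv x y → a = w v tv htv x) ∧
      ((¬ ∃ v tv x, tv ∈ M.mv.rels v ∧ Renames v tv x y) → a = ν0 y) := by
    intro y
    by_cases hy : ∃ v tv x, tv ∈ M.mv.rels v ∧ Renames v tv x y
    · obtain ⟨v, tv, x, htv, hx⟩ := hy
      refine ⟨w v tv htv x, fun v' tv' htv' x' hx' => ?_, fun hn => absurd ⟨v, tv, x, htv, hx⟩ hn⟩
      obtain ⟨rfl, htt, rfl⟩ := hνinj v v' tv tv' x x' htv htv' hx.1 hx.2.1 hx'.1 hx'.2.1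
        (hx.2.2.trans hx'.2.2.symm)
      cases htt
      rfl
    · exact ⟨ν0 y, fun v tv htv x hx => absurd ⟨v, tv, x, htv, hx⟩ hy, fun _ => rfl⟩
  choose μ hμw hμ0 using hval
  have hμQ1 : ∀ y ∈ BodyVars Q1.body, μ y = ν0 y := by
    refine fun y hy => hμ0 y ?_
    rintro ⟨v, tv, x, htv, hx, hxh, hxy⟩
    obtain ⟨y', hy', -, hfresh⟩ := hνfresh v tv htv x hx hxh
    rw [hxy, Term.var.injEq] at hy'
    exact hfresh (hy' ▸ hy)
  have hμexp : ∀ v tv (htv : tv ∈ M.mv.rels v), ∀ x ∈ BodyVars (M.views.defn v).body,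
      (ν v tv x).eval μ = w v tv htv x := by
    intro v tv htv x hx
    by_cases hxh : ∃ i, (M.views.defn v).head i = .var x
    · obtain ⟨i, hi⟩ := hxh
      have hνx := hνhead v tv htv i
      rw [hi] at hνx
      rw [show ν v tv x = _ from hνx, Val.eval_toTerm (M.mvGround v tv htv i),
        congrFun (hwhead v tv htv) i, hi]
      rfl
    · obtain ⟨y, hy, -⟩ := hνfresh v tv htv x hx hxh
      rw [hy]
      exact hμw y v tv htv x ⟨hx, hxh, hy⟩
  refine ⟨μ, fun A hA => ?_, hμQ1⟩
  rcases (Set.ext_iff.1 hbody A).1 hA with hA | ⟨v, tv, htv, A0, hA0, rfl⟩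
  · have e : ∀ i, (A.args i).eval μ = (A.args i).eval ν0 := fun i => by
      cases h : A.args i
      exacts [hμQ1 _ ⟨A, hA, i, h⟩, rfl]
    simpa only [e] using hν0 A hA
  · have e : ∀ i, ((A0.args i).subst (ν v tv)).eval μ = (A0.args i).eval (w v tv htv) :=
      fun i => by
        rw [Term.eval_subst]
        cases h : A0.args i
        exacts [hμexp v tv htv _ ⟨A0, hA0, i, h⟩, rfl]
    show (fun i => ((A0.args i).subst (ν v tv)).eval μ) ∈ I.rels A0.rel
    simpa only [e] using hw v tv htv A0 hA0

lemma MVSetting.IsMSExpansion.answer_subset {M : MVSetting} {Q1 : CQ M.S k}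
    {Q1' : CQNeq M.S k} (hexp : M.IsMSExpansion Q1 Q1') (h1 : Q1.Safe) {I : Inst M.S}
    (hI : M.ValidBase I) : Q1.answer I ⊆ Q1'.answer I := by
  rintro _ ⟨ν0, hν0, rfl⟩
  obtain ⟨μ, hμ, hμν0⟩ := hexp.exists_bodyHolds (fun v => (hI.2.2 v).symm.subset) hν0
  refine ⟨μ, hμ, (fun p hp => by rw [hexp.2.1] at hp; cases hp), funext fun i => ?_⟩
  rw [hexp.1]
  cases h : Q1.head i
  exacts [(hμν0 _ (h1.2 _ ⟨i, h⟩)).symm, rfl]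

lemma MVSetting.IsChaseResult.mem_ucqAnswer {M : MVSetting} {Q0 : CQNeq M.S k}
    {R : List (CQNeq M.S k)} (hR : M.IsChaseResult Q0 R) {I : Inst M.S} (hI : M.ValidBase I)
    {t : Fin k → Val} (ht : t ∈ Q0.answer I) : t ∈ ucqAnswer R I := by
  obtain ⟨T, hlab, hvalid, rfl⟩ := hR
  obtain ⟨_, hx, Q, rfl, hQ⟩ := hvalid.exists_mem_leaves
    (fun o => ∃ Q, o = some Q ∧ t ∈ Q.answer I)
    (by
      rintro _ ⟨Q, rfl, hQ⟩ C hC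
      obtain ⟨Q', hQ'C, hQ'⟩ := M.exists_child_answer hI hQ hC
      exact ⟨_, hQ'C, Q', rfl, hQ'⟩)
    ⟨Q0, hlab, ht⟩
  exact ⟨Q, List.mem_filterMap.2 ⟨_, hx, rfl⟩, hQ⟩

lemma MVSetting.IsChaseResult.expansionMapsInto {M : MVSetting} {Q1 : CQ M.S k}
    {Q1' : CQNeq M.S k} {R : List (CQNeq M.S k)} (hR : M.IsChaseResult Q1' R)
    (hexp : M.IsMSExpansion Q1 Q1') {Q : CQNeq M.S k} (hQ : Q ∈ R) :
    M.ExpansionMapsInto Q1 Q ∧ M.qSteps k (some Q) = ∅ := by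
  obtain ⟨T, hlab, hvalid, rfl⟩ := hR
  obtain ⟨_, ho, rfl⟩ := List.mem_filterMap.1 hQ
  refine ⟨hvalid.forall_mem_leaves (fun o => ∀ Q, o = some Q → M.ExpansionMapsInto Q1 Q)
    ?_ ?_ _ ho Q rfl, hvalid.eq_empty_of_mem_leaves (fun _ _ => M.nonempty_of_mem_qSteps) _ ho⟩
  · rintro (_ | Qa) hQa C hC _ hb Q' rfl
    · exact absurd hC (Set.notMem_empty C)
    · exact (hQa Qa rfl).qStep ⟨C, hC, hb⟩
  · rintro Q hQ
    rw [hlab, Option.some.injEq] at hQ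
    exact hQ ▸ hexp.expansionMapsInto

lemma MVSetting.answer_subset_of_terminal {M : MVSetting} {Q1 Q2 : CQ M.S k} {Q : CQNeq M.S k}
    (hcond : M.CondContained Q1.answer Q2.answer) (hmaps : M.ExpansionMapsInto Q1 Q)
    (hleaf : M.qSteps k (some Q) = ∅) (I : Inst M.S) : Q.answer I ⊆ Q2.answer I := by
  intro t ht
  obtain ⟨μ, hb, hd, -⟩ := id ht
  have hdne : ∀ a, ¬ Q.hasDiseq a a := fun a => CQNeq.Sat.not_hasDiseq ⟨hb, hd⟩ rfl
  have := M.views.finite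
  obtain ⟨W, hW⟩ := exists_idx_bound
    ((((Q.terms_finite.union (atomsTerms_finite Q2.body)).union (Set.finite_range Q2.head)).union
      (Set.finite_iUnion fun v => atomsTerms_finite (M.views.defn v).body)))
  have hQ : ∀ c, Term.const c ∈ Q.terms → c < W := fun c hc => hW _ (Or.inl (Or.inl (Or.inl hc)))
  have hvalid := M.validBase_canonInst hleaf hQ hdne
    (fun v c hc => hW _ (Or.inr (Set.mem_iUnion.2 ⟨v, hc⟩))) hmaps.2
  refine answer_subset_of_mem_answer_canonInst hQ ?_
    (hcond _ hvalid (hmaps.1.mem_answer (bodyHolds_canonInst Q W))) I ht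
  rintro c (hc | hc)
  exacts [hW _ (Or.inl (Or.inl (Or.inr hc))), hW _ (Or.inl (Or.inr hc))]

theorem cond_containment_iff_chase (M : MVSetting) (hwa : WeaklyAcyclic M.deps)
    {k : ℕ} (Q1 Q2 : CQ M.S k) (h1 : Q1.Safe) (h2 : Q2.Safe)
    (Q1' : CQNeq M.S k) (hexp : M.IsMSExpansion Q1 Q1')
    (R : List (CQNeq M.S k)) (hR : M.IsChaseResult Q1' R) :
    M.CondContained Q1.answer Q2.answer ↔
      (R = [] ∨ ∀ I : Inst M.S, ucqAnswer R I ⊆ Q2.answer I) := by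
  constructor
  · refine fun hcond => Or.inr fun I t ⟨Q, hQR, ht⟩ => ?_
    obtain ⟨hmaps, hleaf⟩ := hR.expansionMapsInto hexp hQR
    exact M.answer_subset_of_terminal hcond hmaps hleaf I ht
  · rintro hR' I hI t ht
    obtain ⟨Q, hQR, hQ⟩ := hR.mem_ucqAnswer hI (hexp.answer_subset h1 hI ht)
    rcases hR' with rfl | hsub
    · cases hQR
    · exact hsub I ⟨Q, hQR, hQ⟩

end CertainViews
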